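/- arXiv:2112.08034 — 3 statements merged into one kernel-verified Lean document; each statement's English description precedes it below -/
import Mathlib

section
/- Iterating the ordered shuffle over all permutations recovers the full shuffle: for nonempty words w^1, ..., w^m, the multiset Sh(w^1, ..., w^m) of all shuffles of the words equals the disjoint union over π ∈ S_m of the multisets of ordered shuffles of (w^{π(1)}, ..., w^{π(m)}). Equivalently, as a diagram statement: m! · (symmetrization) ∘ (reduced iterated ordered-shuffle coproduct) = (reduced iterated shuffle coproduct) on T(V). -/
/-- Multiset of all shuffles (interleavings) of two lists. -/
def shuffles {α : Type*} : List α → List α → Multiset (List α)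
  | [], bs => {bs}
  | a :: as, [] => {a :: as}
  | a :: as, b :: bs =>
      (shuffles as (b :: bs)).map (a :: ·) + (shuffles (a :: as) bs).map (b :: ·)
termination_by as bs => as.length + bs.length

/-- Half (ordered) shuffle of two words: the shuffles in which the last letter
of the second word stays last.  Convention: `osh2 a [] = 0`, `osh2 [] b = {b}`. -/
def osh2 {α : Type*} (a b : List α) : Multiset (List α) :=
  match b.getLast? with
  | none => 0
  | some x => (shuffles a b.dropLast).map (· ++ [x])

/-- Multiset of ordered shuffles of a list of words (iterated half-shuffle,
left to right): interleavings in which the final letters of the words appear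
in the given relative order. -/
def oshMany {α : Type*} (ws : List (List α)) : Multiset (List α) :=
  ws.foldl (fun acc w => acc.bind fun u => osh2 u w) {([] : List α)}

/-- Multiset of all shuffles of a list of words. -/
def shMany {α : Type*} (ws : List (List α)) : Multiset (List α) :=
  ws.foldl (fun acc w => acc.bind fun u => shuffles u w) {([] : List α)}

/-!
Write `u ≺ v` (`osh2 u v`) for the shuffles of `u` and `v` in which the last letter of `v` comes
last, so that `u ⧢ v = v ≺ u + u ≺ v` for `v ≠ []`. Sorting the shuffles of nonempty words
`w¹, …, wᵐ` by the word that supplies the final letter gives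
`Sh(w¹, …, wᵐ) = ∑ₚ Sh(w¹, …, ŵᵖ, …, wᵐ) ≺ wᵖ`; this follows by induction on `m` from the
half-shuffle identity `w ≺ (s ≺ a) = (s ⧢ w) ≺ a`. On the other side, the ordered shuffles of
`(w^{π(1)}, …, w^{π(m)})` are those of its first `m - 1` words, `≺ w^{π(m)}`; splitting each
permutation `π` into `p = π(m)` and a permutation of the remaining indices reduces the theorem to
the decomposition above and the induction hypothesis.
-/

theorem Multiset.finsetSum_bind {ι β γ : Type*} (s : Finset ι) (M : ι → Multiset β)
    (f : β → Multiset γ) : (∑ i ∈ s, M i).bind f = ∑ i ∈ s, (M i).bind f :=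
  map_sum (⟨⟨(·.bind f), Multiset.zero_bind f⟩, fun s t => Multiset.add_bind s t f⟩ :
    Multiset β →+ Multiset γ) M s

namespace Fin

open Equiv

variable {n : ℕ}

def insertLastPerm (p : Fin (n + 1)) (σ : Perm (Fin n)) : Perm (Fin (n + 1)) :=
  cycleIcc p (last n) * finSuccEquivLast.symm.permCongr (optionCongr σ)

@[simp]
theorem insertLastPerm_last (p : Fin (n + 1)) (σ : Perm (Fin n)) :
    insertLastPerm p σ (last n) = p := by
  simp [insertLastPerm, permCongr_apply, cycleIcc_of_last (le_last p)]

@[simp]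
theorem insertLastPerm_castSucc (p : Fin (n + 1)) (σ : Perm (Fin n)) (i : Fin n) :
    insertLastPerm p σ i.castSucc = p.succAbove (σ i) := by
  simp only [insertLastPerm, Perm.coe_mul, Function.comp_apply, permCongr_apply,
    symm_symm, finSuccEquivLast_castSucc, optionCongr_apply, Option.map_some,
    finSuccEquivLast_symm_some]
  rw [← cycleIcc_comp_succAbove p (last n) (le_last p), Function.comp_apply,
    succAbove_last_apply]

theorem bijective_insertLastPerm :
    Function.Bijective fun x : Fin (n + 1) × Perm (Fin n) => insertLastPerm x.1 x.2 := by
  refine (Fintype.bijective_iff_injective_and_card _).mpr ⟨?_, ?_⟩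
  · rintro ⟨p, σ⟩ ⟨q, τ⟩ h
    have hpq : p = q := by simpa using congr($h (last n))
    subst hpq
    refine Prod.ext rfl (Equiv.ext fun i => p.succAbove_right_injective ?_)
    simpa using congr($h i.castSucc)
  · simp [Fintype.card_perm, Nat.factorial_succ]

theorem sum_perm_eq_sum_sum_insertLastPerm {M : Type*} [AddCommMonoid M]
    (F : Perm (Fin (n + 1)) → M) : ∑ π, F π = ∑ p, ∑ σ, F (insertLastPerm p σ) := by
  rw [← Fintype.sum_prod_type']
  exact (Fintype.sum_bijective _ bijective_insertLastPerm _ _ fun _ => rfl).symm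

theorem ofFn_comp_castSucc_succAbove {β : Type*} (g : Fin (n + 2) → β) (q : Fin (n + 1)) :
    List.ofFn (g ∘ q.castSucc.succAbove) =
      List.ofFn (g ∘ castSucc ∘ q.succAbove) ++ [g (last _)] := by
  rw [List.ofFn_succ']
  simp [succAbove_ne_last_last (castSucc_lt_last q).ne]
  rfl

theorem ofFn_comp_insertLastPerm {β : Type*} (f : Fin (n + 1) → β) (p : Fin (n + 1))
    (σ : Perm (Fin n)) :
    List.ofFn (f ∘ insertLastPerm p σ) = List.ofFn (f ∘ p.succAbove ∘ σ) ++ [f p] := by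
  rw [List.ofFn_succ', List.concat_eq_append]
  simp only [Function.comp_apply, insertLastPerm_castSucc, insertLastPerm_last]
  rfl

end Fin

section Shuffles

variable {α : Type*}

theorem shuffles_nil_left (b : List α) : shuffles [] b = {b} := by
  rw [shuffles]

theorem shuffles_nil_right (a : List α) : shuffles a [] = {a} := by
  cases a <;> rw [shuffles]

theorem shuffles_cons_cons (x y : α) (a b : List α) :
    shuffles (x :: a) (y :: b)
      = (shuffles a (y :: b)).map (x :: ·) + (shuffles (x :: a) b).map (y :: ·) := by
  rw [shuffles]

theorem shuffles_comm : ∀ a b : List α, shuffles a b = shuffles b a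
  | [], b => by rw [shuffles_nil_left, shuffles_nil_right]
  | x :: a, [] => by rw [shuffles_nil_left, shuffles_nil_right]
  | x :: a, y :: b => by
      rw [shuffles_cons_cons, shuffles_cons_cons y x, shuffles_comm a, shuffles_comm (x :: a),
        add_comm]
termination_by a b => a.length + b.length

theorem shuffles_append_singleton (x y : α) : ∀ u v : List α,
    shuffles (u ++ [x]) (v ++ [y]) =
      (shuffles u (v ++ [y])).map (· ++ [x]) + (shuffles (u ++ [x]) v).map (· ++ [y])
  | [], [] => by
      simp [shuffles_cons_cons, shuffles_nil_left, shuffles_nil_right, add_comm]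
  | [], q :: v => by
      have ih := shuffles_append_singleton x y [] v
      simp only [List.nil_append, List.cons_append] at ih ⊢
      simp only [shuffles_cons_cons, shuffles_nil_left, ih, Multiset.map_add,
        Multiset.map_map, Multiset.map_singleton, Function.comp_def, List.cons_append]
      abel
  | p :: u, [] => by
      have ih := shuffles_append_singleton x y u []
      simp only [List.nil_append, List.cons_append] at ih ⊢
      simp only [shuffles_cons_cons, shuffles_nil_right, ih, Multiset.map_add,
        Multiset.map_map, Multiset.map_singleton, Function.comp_def, List.cons_append]
      abel
  | p :: u, q :: v => by
      have ih₁ := shuffles_append_singleton x y u (q :: v)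
      have ih₂ := shuffles_append_singleton x y (p :: u) v
      simp only [List.cons_append] at ih₁ ih₂ ⊢
      simp only [shuffles_cons_cons, ih₁, ih₂, Multiset.map_add, Multiset.map_map,
        Function.comp_def, List.cons_append]
      abel
termination_by u v => u.length + v.length

theorem bind_shuffles_cons_cons_cons (u a b : List α) (p q r : α) :
    (shuffles (p :: u) (q :: a)).bind (shuffles · (r :: b)) =
      ((shuffles u (q :: a)).bind (shuffles · (r :: b))).map (p :: ·) +
      ((shuffles (p :: u) a).bind (shuffles · (r :: b))).map (q :: ·) +
      ((shuffles (p :: u) (q :: a)).bind (shuffles · b)).map (r :: ·) := by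
  have cons_bind : ∀ (h : α) (M : Multiset (List α)),
      (M.map (h :: ·)).bind (shuffles · (r :: b)) =
        (M.bind (shuffles · (r :: b))).map (h :: ·) +
          ((M.map (h :: ·)).bind (shuffles · b)).map (r :: ·) := by
    intro h M
    simp only [Multiset.bind_map, shuffles_cons_cons, Multiset.bind_add, Multiset.map_bind]
  rw [shuffles_cons_cons p q, Multiset.add_bind, cons_bind, cons_bind, Multiset.add_bind,
    Multiset.map_add]
  abel

theorem shuffles_bind_comm : ∀ u a b : List α,
    (shuffles u a).bind (shuffles · b) = (shuffles u b).bind (shuffles · a)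
  | [], a, b => by
      rw [shuffles_nil_left, shuffles_nil_left, Multiset.singleton_bind, Multiset.singleton_bind,
        shuffles_comm]
  | p :: u, [], b => by simpa [shuffles_nil_right] using (Multiset.bind_singleton _ id).symm
  | p :: u, q :: a, [] => by simpa [shuffles_nil_right] using Multiset.bind_singleton _ id
  | p :: u, q :: a, r :: b => by
      rw [bind_shuffles_cons_cons_cons, bind_shuffles_cons_cons_cons u b a p r q,
        shuffles_bind_comm u (q :: a), shuffles_bind_comm (p :: u) a,
        shuffles_bind_comm (p :: u) (q :: a) b]
      abel
termination_by u a b => u.length + a.length + b.length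

end Shuffles

section HalfShuffle

variable {α : Type*}

@[simp]
theorem osh2_nil_right (u : List α) : osh2 u [] = 0 := rfl

theorem osh2_append_singleton (u v : List α) (y : α) :
    osh2 u (v ++ [y]) = (shuffles u v).map (· ++ [y]) := by
  simp [osh2]

theorem shuffles_eq_osh2_add_osh2 (u : List α) {v : List α} (hv : v ≠ []) :
    shuffles u v = osh2 v u + osh2 u v := by
  obtain ⟨v, y, rfl⟩ := List.eq_nil_or_concat v |>.resolve_left hv
  rcases List.eq_nil_or_concat u with rfl | ⟨u, x, rfl⟩
  · simp [osh2_append_singleton, shuffles_nil_left]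
  · simp only [List.concat_eq_append, shuffles_append_singleton, osh2_append_singleton,
      shuffles_comm u]

theorem osh2_bind_osh2 (s a w : List α) :
    (osh2 s a).bind (osh2 w ·) = (shuffles s w).bind (osh2 · a) := by
  rcases List.eq_nil_or_concat a with rfl | ⟨a, x, rfl⟩
  · simp
  · simp only [List.concat_eq_append, osh2_append_singleton, Multiset.bind_map,
      ← Multiset.map_bind, shuffles_comm w]
    rw [shuffles_bind_comm]

end HalfShuffle


section Iterated

variable {α : Type*}

theorem shMany_append_singleton (l : List (List α)) (w : List α) :
    shMany (l ++ [w]) = (shMany l).bind (shuffles · w) :=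
  List.foldl_concat _ _ _ _

theorem oshMany_append_singleton (l : List (List α)) (w : List α) :
    oshMany (l ++ [w]) = (oshMany l).bind (osh2 · w) :=
  List.foldl_concat _ _ _ _

theorem shMany_ofFn_eq_sum_bind_osh2 :
    ∀ {n : ℕ} (g : Fin (n + 1) → List α), (∀ i, g i ≠ []) →
    shMany (List.ofFn g) = ∑ p, (shMany (List.ofFn (g ∘ p.succAbove))).bind (osh2 · (g p))
  | 0, g, hg => by
      have h := shuffles_eq_osh2_add_osh2 [] (hg 0)
      simp only [osh2_nil_right, zero_add, shuffles_nil_left] at h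
      simp [shMany, ← h, shuffles_nil_left]
  | n + 1, g, hg => by
      have ih := shMany_ofFn_eq_sum_bind_osh2 (fun i => g i.castSucc) fun i => hg _
      rw [List.ofFn_succ', List.concat_eq_append, shMany_append_singleton, Fin.sum_univ_castSucc,
        Multiset.bind_congr fun t _ => shuffles_eq_osh2_add_osh2 t (hg (Fin.last _)),
        Multiset.bind_add]
      congr 1
      · rw [ih, Multiset.finsetSum_bind]
        refine Finset.sum_congr rfl fun q _ => ?_
        rw [Multiset.bind_assoc, Multiset.bind_congr fun s _ => osh2_bind_osh2 s _ _,
          ← Multiset.bind_assoc, ← shMany_append_singleton, Fin.ofFn_comp_castSucc_succAbove]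
        rfl
      · simp only [Fin.succAbove_last]
        rfl

theorem shMany_ofFn_eq_sum_oshMany : ∀ {n : ℕ} (g : Fin n → List α), (∀ i, g i ≠ []) →
    shMany (List.ofFn g) = ∑ π : Equiv.Perm (Fin n), oshMany (List.ofFn (g ∘ π))
  | 0, g, _ => by simp [shMany, oshMany]
  | n + 1, g, hg => by
      rw [Fin.sum_perm_eq_sum_sum_insertLastPerm, shMany_ofFn_eq_sum_bind_osh2 g hg]
      refine Finset.sum_congr rfl fun p _ => ?_
      simp only [Fin.ofFn_comp_insertLastPerm, oshMany_append_singleton,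
        ← Multiset.finsetSum_bind]
      rw [shMany_ofFn_eq_sum_oshMany (g ∘ p.succAbove) fun i => hg _]
      rfl

end Iterated

/-- For nonempty words `w¹, …, wᵐ`, the multiset
`Sh(w¹,…,wᵐ)` of all shuffles equals the disjoint union, over permutations
`π ∈ S_m`, of the multisets of ordered shuffles of `(w^{π(1)},…,w^{π(m)})`. -/
theorem shuffles_eq_sum_orderedShuffles {α : Type*} (ws : List (List α))
    (hws : ∀ w ∈ ws, w ≠ []) :
    shMany ws =
      ∑ π : Equiv.Perm (Fin ws.length), oshMany (List.ofFn fun i => ws.get (π i)) := by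
  conv_lhs => rw [← List.ofFn_get ws]
  exact shMany_ofFn_eq_sum_oshMany ws.get fun i => hws _ (List.get_mem ws i)
end

section
/- The shuffle algebra (T(ℝ^d), ⧢) over the rationals (or reals) is a free commutative algebra: it is a polynomial algebra on the Lyndon words, so every word has a unique expression (up to ordering of factors) as a polynomial with rational coefficients in shuffle products of Lyndon words. -/
/-- Sum of basis elements indexed by a multiset of words in
`T(ℝ^d) = List (Fin d) →₀ ℝ`. -/
noncomputable def mToF {I : Type*} (m : Multiset (List I)) : List I →₀ ℝ :=
  (m.map fun w => Finsupp.single w (1 : ℝ)).sum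

/-- The shuffle product on the tensor algebra `T(ℝ^d)`, as the bilinear
extension of the shuffle of words. -/
noncomputable def shF {I : Type*} (x y : List I →₀ ℝ) : List I →₀ ℝ :=
  x.sum fun a ca => y.sum fun b cb => (ca * cb) • mToF (shuffles a b)

/-- Iterated shuffle product of a list of words (`1` for the empty list). -/
noncomputable def shListProd {I : Type*} (l : List (List I)) : List I →₀ ℝ :=
  l.foldr (fun w acc => shF (Finsupp.single w (1 : ℝ)) acc) (Finsupp.single [] (1 : ℝ))

/-- A Lyndon word: a nonempty word that is lexicographically strictly smaller
than all of its proper right factors. -/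
def IsLyndon {d : ℕ} (w : List (Fin d)) : Prop :=
  w ≠ [] ∧ ∀ u v : List (Fin d), w = u ++ v → u ≠ [] → v ≠ [] → List.Lex (· < ·) w v

/-- Lexicographic-or-equal order on words. -/
def WordLE {d : ℕ} (a b : List (Fin d)) : Prop := List.Lex (· < ·) a b ∨ a = b

/-!
The shuffle product `l₁ ⧢ ⋯ ⧢ l_k` of a nondecreasing list of Lyndon words is triangular with
respect to the basis of words. By the Chen–Fox–Lyndon theorem every word factors uniquely as a
nonincreasing product `l_k ⋯ l₁` of Lyndon words. This word occurs in `l₁ ⧢ ⋯ ⧢ l_k` with a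
positive coefficient, and every other word occurring there has the same length and is
lexicographically smaller, so the shuffle products form a basis.

The comparison is proved by induction on the word: its first letter `a` comes from some factor
`a s`, the rest is an interleaving of `s` with the other factors, and refactoring `s` into Lyndon
words reduces the claim to `a · D(F(s) ∪ Q) ≤ D({a s} ∪ Q)`, where `D` concatenates a multiset of
words in nonincreasing order. This holds because the Lyndon factors of a proper suffix of a Lyndon
word `m` all exceed `m`, while a proper suffix of a Lyndon word `g` exceeds every concatenation of
words `≤ g`.
-/

section LexOrder

variable {α : Type*} [LinearOrder α]

theorem List.append_lt_append_left_iff (p : List α) {u v : List α} : p ++ u < p ++ v ↔ u < v :=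
  (show StrictMono (p ++ ·) from fun _ _ => List.append_left_lt).lt_iff_lt

/-- Core's `List.IsPrefix.le` is about core's `≤` on lists, which is not syntactically the `≤` of
`LinearOrder (List α)`. -/
theorem List.IsPrefix.le' {u v : List α} (h : u <+: v) : u ≤ v :=
  not_lt.1 h.le

theorem List.append_lt_append_of_lt_of_not_prefix {u v : List α} (h : u < v) (hp : ¬u <+: v)
    (x y : List α) : u ++ x < v ++ y := by
  induction h with
  | nil => exact absurd (List.nil_prefix) hp
  | cons _ ih =>
    exact List.cons_lt_cons_iff.2 (Or.inr ⟨rfl, ih fun h => hp ((List.prefix_cons_inj _).2 h)⟩)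
  | rel hab => exact List.Lex.rel hab

end LexOrder

theorem List.exists_prefix_of_prefix_flatten {α : Type*} {r : List α} {Q : List (List α)}
    (h : r <+: Q.flatten) (hr : r ≠ []) : ∃ x ∈ Q, ∃ pre u, r = pre ++ u ∧ u ≠ [] ∧ u <+: x := by
  induction Q generalizing r with
  | nil => exact absurd (List.prefix_nil.1 h) hr
  | cons x Q ih =>
    rw [List.flatten_cons] at h
    by_cases hlen : r.length ≤ x.length
    · exact ⟨x, List.mem_cons_self, [], r, rfl, hr,
        List.prefix_of_prefix_length_le h (List.prefix_append _ _) hlen⟩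
    · obtain ⟨r', rfl⟩ :=
        List.prefix_of_prefix_length_le (List.prefix_append _ _) h (not_le.1 hlen).le
      have hr' : r' ≠ [] := by rintro rfl; simp at hlen
      obtain ⟨y, hy, pre, u, rfl, hu, huy⟩ := ih ((List.prefix_append_right_inj x).1 h) hr'
      exact ⟨y, List.mem_cons_of_mem x hy, x ++ pre, u, by simp, hu, huy⟩

section Lyndon

variable {α : Type*} [LinearOrder α]

def IsLyndonWord (w : List α) : Prop :=
  w ≠ [] ∧ ∀ u v : List α, w = u ++ v → u ≠ [] → v ≠ [] → w < v

namespace IsLyndonWord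

variable {u v w : List α}

theorem ne_nil (h : IsLyndonWord w) : w ≠ [] := h.1

theorem lt_of_eq_append (h : IsLyndonWord w) (e : w = u ++ v) (hu : u ≠ []) (hv : v ≠ []) :
    w < v :=
  h.2 u v e hu hv

theorem singleton (a : α) : IsLyndonWord [a] := by
  refine ⟨List.cons_ne_nil _ _, fun u v e hu hv => absurd (congrArg List.length e) ?_⟩
  have := List.length_pos_iff.2 hu
  have := List.length_pos_iff.2 hv
  simp only [List.length_singleton, List.length_append]
  omega

theorem append (hu : IsLyndonWord u) (hv : IsLyndonWord v) (huv : u < v) :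
    IsLyndonWord (u ++ v) := by
  have huvv : u ++ v < v := by
    by_cases hp : u <+: v
    · obtain ⟨t, rfl⟩ := hp
      have ht : t ≠ [] := by rintro rfl; simp at huv
      exact (List.append_lt_append_left_iff u).2 (hv.lt_of_eq_append rfl hu.ne_nil ht)
    · simpa using List.append_lt_append_of_lt_of_not_prefix huv hp v []
  refine ⟨by simp [hu.ne_nil], fun x y e hx hy => ?_⟩
  rcases List.append_eq_append_iff.1 e with ⟨w', rfl, rfl⟩ | ⟨w', rfl, rfl⟩
  · rcases eq_or_ne w' [] with rfl | hw
    · simpa using huvv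
    · exact huvv.trans (hv.lt_of_eq_append rfl hw hy)
  · rcases eq_or_ne w' [] with rfl | hw
    · simpa using huvv
    · have hnp : ¬x ++ w' <+: w' := fun hp => by
        have h₁ := hp.length_le
        have h₂ := List.length_pos_iff.2 hx
        rw [List.length_append] at h₁
        omega
      exact List.append_lt_append_of_lt_of_not_prefix (hu.lt_of_eq_append rfl hx hw) hnp v v

end IsLyndonWord

def IsLyndonFactorization (L : List (List α)) : Prop :=
  L.Pairwise (· ≥ ·) ∧ ∀ x ∈ L, IsLyndonWord x

theorem IsLyndonFactorization.of_cons {x : List α} {L : List (List α)}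
    (h : IsLyndonFactorization (x :: L)) : IsLyndonFactorization L :=
  ⟨h.1.of_cons, fun y hy => h.2 y (List.mem_cons_of_mem x hy)⟩

def lyndonInsert (c : List α) : List (List α) → List (List α)
  | [] => [c]
  | l :: L => if c < l then lyndonInsert (c ++ l) L else c :: l :: L

def lyndonFactorization : List α → List (List α)
  | [] => []
  | a :: w => lyndonInsert [a] (lyndonFactorization w)

theorem flatten_lyndonInsert (c : List α) (L : List (List α)) :
    (lyndonInsert c L).flatten = c ++ L.flatten := by
  induction L generalizing c with
  | nil => simp [lyndonInsert]
  | cons l L ih => by_cases h : c < l <;> simp [lyndonInsert, h, ih]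

theorem IsLyndonFactorization.lyndonInsert {c : List α} {L : List (List α)}
    (hc : IsLyndonWord c) (hL : IsLyndonFactorization L) :
    IsLyndonFactorization (lyndonInsert c L) := by
  induction L generalizing c with
  | nil => simpa [_root_.lyndonInsert, IsLyndonFactorization] using hc
  | cons l L ih =>
    by_cases h : c < l
    · rw [_root_.lyndonInsert, if_pos h]
      exact ih (hc.append (hL.2 l List.mem_cons_self) h) hL.of_cons
    · rw [_root_.lyndonInsert, if_neg h]
      have hlc : l ≤ c := not_lt.1 h
      refine ⟨List.pairwise_cons.2 ⟨fun x hx => ?_, hL.1⟩, ?_⟩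
      · rcases List.mem_cons.1 hx with rfl | hx
        · exact hlc
        · exact (List.rel_of_pairwise_cons hL.1 hx).trans hlc
      · simpa [hc] using hL.2

@[simp]
theorem flatten_lyndonFactorization (w : List α) : (lyndonFactorization w).flatten = w := by
  induction w with
  | nil => rfl
  | cons a w ih => simp [lyndonFactorization, flatten_lyndonInsert, ih]

theorem isLyndonFactorization_lyndonFactorization (w : List α) :
    IsLyndonFactorization (lyndonFactorization w) := by
  induction w with
  | nil => simp [lyndonFactorization, IsLyndonFactorization]
  | cons a w ih => exact ih.lyndonInsert (IsLyndonWord.singleton a)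

theorem IsLyndonFactorization.length_le_of_prefix {q p : List α} {Q : List (List α)}
    (hQ : IsLyndonFactorization (q :: Q)) (hp : IsLyndonWord p) (hpre : p <+: q ++ Q.flatten) :
    p.length ≤ q.length := by
  by_contra hlen
  obtain ⟨r, rfl⟩ :=
    List.prefix_of_prefix_length_le (List.prefix_append _ _) hpre (not_le.1 hlen).le
  have hr : r ≠ [] := by rintro rfl; simp at hlen
  obtain ⟨x, hx, pre, u, rfl, hu, hux⟩ :=
    List.exists_prefix_of_prefix_flatten ((List.prefix_append_right_inj q).1 hpre) hr
  have hq : q ≠ [] := (hQ.2 q List.mem_cons_self).ne_nil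
  have h₁ : q ++ (pre ++ u) < u :=
    hp.lt_of_eq_append (List.append_assoc _ _ _).symm (by simp [hq]) hu
  have h₂ : u ≤ q := hux.le'.trans (List.rel_of_pairwise_cons hQ.1 hx)
  exact lt_irrefl _ (h₁.trans_le (h₂.trans (List.prefix_append _ _).le'))

theorem IsLyndonFactorization.eq_of_flatten_eq :
    ∀ {P Q : List (List α)}, IsLyndonFactorization P → IsLyndonFactorization Q →
      P.flatten = Q.flatten → P = Q
  | [], [], _, _, _ => rfl
  | [], q :: Q, _, hQ, h => absurd h.symm (by simp [(hQ.2 q List.mem_cons_self).ne_nil])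
  | p :: P, [], hP, _, h => absurd h (by simp [(hP.2 p List.mem_cons_self).ne_nil])
  | p :: P, q :: Q, hP, hQ, h => by
    rw [List.flatten_cons, List.flatten_cons] at h
    have hp : p <+: q ++ Q.flatten := h ▸ List.prefix_append _ _
    have hq : q <+: p ++ P.flatten := h ▸ List.prefix_append _ _
    have hlen : p.length = q.length :=
      le_antisymm (hQ.length_le_of_prefix (hP.2 p List.mem_cons_self) hp)
        (hP.length_le_of_prefix (hQ.2 q List.mem_cons_self) hq)
    obtain rfl : p = q :=
      (List.prefix_of_prefix_length_le hp (List.prefix_append _ _) hlen.le).eq_of_length hlen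
    rw [eq_of_flatten_eq hP.of_cons hQ.of_cons (List.append_cancel_left h)]

/-- The factors dominate the last one, which is a proper suffix of `p ++ s`. -/
theorem IsLyndonWord.lt_of_mem_factorization {p s : List α} (hm : IsLyndonWord (p ++ s))
    (hp : p ≠ []) {F : List (List α)} (hF : IsLyndonFactorization F) (hFs : F.flatten = s)
    {f : List α} (hf : f ∈ F) : p ++ s < f := by
  obtain ⟨F', z, rfl⟩ := (List.eq_nil_or_concat' F).resolve_left (List.ne_nil_of_mem hf)
  have hlt : p ++ s < z :=
    hm.lt_of_eq_append (u := p ++ F'.flatten) (by simp [← hFs]) (by simp [hp])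
      (hF.2 z (by simp)).ne_nil
  rcases List.mem_append.1 hf with hf | hf
  · exact hlt.trans_le ((List.pairwise_append.1 hF.1).2.2 f hf z (by simp))
  · rwa [List.mem_singleton.1 hf]

end Lyndon

theorem List.Pairwise.exists_eq_append_of_ge {β : Type*} [LinearOrder β] {L : List β}
    (hL : L.Pairwise (· ≥ ·)) (g : β) :
    ∃ L₁ L₂, L = L₁ ++ L₂ ∧ (∀ x ∈ L₁, g < x) ∧ ∀ x ∈ L₂, x ≤ g := by
  induction L with
  | nil => exact ⟨[], [], rfl, by simp, by simp⟩
  | cons x L ih =>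
    by_cases hx : g < x
    · obtain ⟨L₁, L₂, rfl, h₁, h₂⟩ := ih hL.of_cons
      exact ⟨x :: L₁, L₂, rfl, by simpa [hx] using h₁, h₂⟩
    · refine ⟨[], x :: L, rfl, by simp, fun y hy => ?_⟩
      rcases List.mem_cons.1 hy with rfl | hy
      · exact not_lt.1 hx
      · exact (List.rel_of_pairwise_cons hL hy).trans (not_lt.1 hx)

section DescConcat

variable {α : Type*} [LinearOrder α]

def descConcat (S : Multiset (List α)) : List α :=
  (S.sort (· ≥ ·)).flatten

theorem descConcat_coe {L : List (List α)} (hL : L.Pairwise (· ≥ ·)) :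
    descConcat (L : Multiset (List α)) = L.flatten := by
  rw [descConcat, Multiset.coe_sort, List.mergeSort_eq_self _ hL]

theorem descConcat_add {S T : Multiset (List α)} (h : ∀ x ∈ S, ∀ y ∈ T, y ≤ x) :
    descConcat (S + T) = descConcat S ++ descConcat T := by
  have hST : S + T = ↑(S.sort (· ≥ ·) ++ T.sort (· ≥ ·)) := by
    rw [← Multiset.coe_add, Multiset.sort_eq, Multiset.sort_eq]
  rw [hST, descConcat_coe, List.flatten_append, descConcat, descConcat]
  exact List.pairwise_append.2 ⟨Multiset.pairwise_sort _ _, Multiset.pairwise_sort _ _,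
    fun x hx y hy => h x ((Multiset.mem_sort _).1 hx) y ((Multiset.mem_sort _).1 hy)⟩

theorem descConcat_cons {m : List α} {S : Multiset (List α)} (h : ∀ x ∈ S, x ≤ m) :
    descConcat (m ::ₘ S) = m ++ descConcat S := by
  rw [← Multiset.singleton_add, descConcat_add (by simpa using h), ← Multiset.coe_singleton,
    descConcat_coe (List.pairwise_singleton _ _), List.flatten_singleton]

theorem IsLyndonWord.append_flatten_lt {p s u : List α} {K : List (List α)}
    (hg : IsLyndonWord (p ++ s)) (hp : p ≠ []) (hu : u < s) (hK : ∀ x ∈ K, x ≤ p ++ s)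
    (y : List α) : u ++ K.flatten < s ++ y := by
  induction K generalizing p s u with
  | nil => simpa using hu.trans_le (List.prefix_append s y).le'
  | cons x K ih =>
    by_cases hpre : u <+: s
    · obtain ⟨s₂, rfl⟩ := hpre
      have hs₂ : s₂ ≠ [] := by rintro rfl; simp at hu
      have hg' : IsLyndonWord (p ++ u ++ s₂) := by simpa using hg
      rw [List.append_assoc, List.append_lt_append_left_iff, List.flatten_cons]
      refine ih hg' (by simp [hp]) ?_ fun z hz => by simpa using hK z (List.mem_cons_of_mem x hz)
      exact (hK x List.mem_cons_self).trans_lt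
        (by simpa using hg'.lt_of_eq_append rfl (by simp [hp]) hs₂)
    · exact List.append_lt_append_of_lt_of_not_prefix hu hpre _ _

/-- The words of `F` above `p ++ s` come first in `descConcat` and form a prefix of `F.flatten`;
all later words are `≤ p ++ s`. -/
theorem IsLyndonWord.descConcat_add_lt {p s : List α} (hg : IsLyndonWord (p ++ s)) (hp : p ≠ [])
    {F : List (List α)} (hF : F.Pairwise (· ≥ ·)) (hFs : F.flatten < s) {Q : Multiset (List α)}
    (hQ : ∀ q ∈ Q, q ≤ p ++ s) (y : List α) :
    descConcat ((F : Multiset (List α)) + Q) < s ++ y := by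
  obtain ⟨F₁, F₂, rfl, h₁, h₂⟩ := hF.exists_eq_append_of_ge (p ++ s)
  have hsplit : descConcat (((F₁ ++ F₂ : List (List α)) : Multiset (List α)) + Q) =
      F₁.flatten ++ descConcat ((F₂ : Multiset (List α)) + Q) := by
    rw [← Multiset.coe_add, add_assoc, descConcat_add, descConcat_coe (List.pairwise_append.1 hF).1]
    intro x hx z hz
    refine le_of_lt (lt_of_le_of_lt ?_ (h₁ x hx))
    rcases Multiset.mem_add.1 hz with hz | hz
    · exact h₂ z hz
    · exact hQ z hz
  rw [hsplit]
  refine hg.append_flatten_lt hp ?_ (fun x hx => ?_) y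
  · exact (List.prefix_append _ _).le'.trans_lt (by simpa using hFs)
  · rcases Multiset.mem_add.1 ((Multiset.mem_sort _).1 hx) with hx | hx
    · exact h₂ x hx
    · exact hQ x hx

theorem IsLyndonWord.cons_descConcat_le {a : α} {s : List α} (hm : IsLyndonWord (a :: s))
    {Q : Multiset (List α)} (hQ : ∀ q ∈ Q, IsLyndonWord q) :
    a :: descConcat ((lyndonFactorization s : Multiset (List α)) + Q) ≤
      descConcat ((a :: s) ::ₘ Q) := by
  have hF := isLyndonFactorization_lyndonFactorization s
  by_cases hmax : ∀ q ∈ Q, q ≤ a :: s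
  · have hgt : ∀ f ∈ lyndonFactorization s, a :: s < f := fun f hf =>
      hm.lt_of_mem_factorization (p := [a]) (List.cons_ne_nil _ _) hF
        (flatten_lyndonFactorization s) hf
    rw [descConcat_cons hmax, descConcat_add fun f hf q hq => (hmax q hq).trans (hgt f hf).le,
      descConcat_coe hF.1, flatten_lyndonFactorization]
    rfl
  · obtain ⟨q, hq, hmq⟩ : ∃ q ∈ Q, a :: s < q := by simpa using hmax
    obtain ⟨h, hhQ, hQh⟩ := Q.toFinset.exists_max_image id ⟨q, Multiset.mem_toFinset.2 hq⟩
    simp only [Multiset.mem_toFinset, id] at hhQ hQh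
    have hmh : a :: s < h := hmq.trans_le (hQh q hq)
    have hle : ∀ x ∈ (a :: s) ::ₘ Q.erase h, x ≤ h := fun x hx => by
      rcases Multiset.mem_cons.1 hx with rfl | hx
      exacts [hmh.le, hQh x (Multiset.mem_of_mem_erase hx)]
    rw [← Multiset.cons_erase hhQ, Multiset.cons_swap, descConcat_cons hle, Multiset.cons_erase hhQ]
    obtain ⟨b, h', rfl⟩ := List.exists_cons_of_ne_nil (hQ h hhQ).ne_nil
    refine le_of_lt (List.cons_lt_cons_iff.2 ?_)
    rcases List.cons_lt_cons_iff.1 hmh with hab | ⟨rfl, hsh'⟩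
    · exact Or.inl hab
    · exact Or.inr ⟨rfl, (hQ _ hhQ).descConcat_add_lt (p := [a]) (List.cons_ne_nil _ _) hF.1
        (by rwa [flatten_lyndonFactorization]) hQh _⟩

end DescConcat

section Interleaving

variable {α : Type*}

def IsInterleaving : Multiset (List α) → List α → Prop
  | S, [] => ∀ s ∈ S, s = []
  | S, a :: w => ∃ t T, S = (a :: t) ::ₘ T ∧ IsInterleaving (t ::ₘ T) w

namespace IsInterleaving

theorem cons_cons {S : Multiset (List α)} {w : List α} (a : α) {s : List α}
    (h : IsInterleaving (s ::ₘ S) w) : IsInterleaving ((a :: s) ::ₘ S) (a :: w) :=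
  ⟨s, S, rfl, h⟩

theorem cons_self {S : Multiset (List α)} (h : IsInterleaving S []) :
    ∀ x : List α, IsInterleaving (x ::ₘ S) x
  | [] => by simpa [IsInterleaving] using h
  | a :: x => cons_cons a (cons_self h x)

theorem cons_nil_iff {S : Multiset (List α)} {w : List α} :
    IsInterleaving ([] ::ₘ S) w ↔ IsInterleaving S w := by
  induction w generalizing S with
  | nil => simp [IsInterleaving]
  | cons a w ih =>
    constructor
    · rintro ⟨t, T, hS, h⟩
      obtain ⟨-, cs, rfl, rfl⟩ :=
        (Multiset.cons_eq_cons.1 hS).resolve_left fun h => List.cons_ne_nil _ _ h.1.symm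
      rw [Multiset.cons_swap] at h
      exact cons_cons a (ih.1 h)
    · rintro ⟨t, T, rfl, h⟩
      refine ⟨t, [] ::ₘ T, Multiset.cons_swap _ _ _, ?_⟩
      rw [Multiset.cons_swap]
      exact ih.2 h

theorem cons_append {S : Multiset (List α)} {w u v : List α}
    (h : IsInterleaving ((u ++ v) ::ₘ S) w) : IsInterleaving (u ::ₘ v ::ₘ S) w := by
  induction w generalizing u v S with
  | nil =>
    have huv := List.append_eq_nil_iff.1 (h _ (Multiset.mem_cons_self _ _))
    intro x hx
    rcases Multiset.mem_cons.1 hx with rfl | hx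
    · exact huv.1
    rcases Multiset.mem_cons.1 hx with rfl | hx
    · exact huv.2
    exact h x (Multiset.mem_cons_of_mem hx)
  | cons a w ih =>
    obtain ⟨t, T, hS, h⟩ := h
    rcases Multiset.cons_eq_cons.1 hS with ⟨he, rfl⟩ | ⟨-, cs, rfl, rfl⟩
    · cases u with
      | nil =>
        subst he
        exact cons_nil_iff.2 (cons_cons a h)
      | cons b u =>
        simp only [List.cons_append, List.cons.injEq] at he
        obtain ⟨rfl, rfl⟩ := he
        exact cons_cons _ (ih h)
    · rw [Multiset.cons_swap] at h
      have h' := ih h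
      rw [Multiset.cons_swap v t, Multiset.cons_swap u t] at h'
      have h'' := cons_cons a h'
      rwa [Multiset.cons_swap (a :: t) u, Multiset.cons_swap (a :: t) v] at h''

theorem of_cons_flatten {S : Multiset (List α)} {w : List α} :
    ∀ {L : List (List α)}, IsInterleaving (L.flatten ::ₘ S) w →
      IsInterleaving ((L : Multiset (List α)) + S) w
  | [], h => by simpa using cons_nil_iff.1 h
  | x :: L, h => by
    have h' := cons_append h
    rw [Multiset.cons_swap] at h'
    have := of_cons_flatten h'
    rwa [Multiset.add_cons, ← Multiset.cons_add, Multiset.cons_coe] at this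

theorem of_mem_shuffles : ∀ {S : Multiset (List α)} {u z w : List α},
    IsInterleaving S z → w ∈ shuffles u z → IsInterleaving (u ::ₘ S) w
  | S, [], z, w, hz, hw => by
    rw [shuffles.eq_1, Multiset.mem_singleton] at hw
    exact hw ▸ cons_nil_iff.2 hz
  | S, a :: u, [], w, hz, hw => by
    rw [shuffles.eq_2, Multiset.mem_singleton] at hw
    exact hw ▸ cons_self hz _
  | S, a :: u, b :: z, w, hz, hw => by
    rw [shuffles.eq_3] at hw
    rcases Multiset.mem_add.1 hw with hw | hw
    · obtain ⟨w', hw', rfl⟩ := Multiset.mem_map.1 hw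
      exact cons_cons a (of_mem_shuffles hz hw')
    · obtain ⟨w', hw', rfl⟩ := Multiset.mem_map.1 hw
      obtain ⟨t, T, rfl, hz⟩ := hz
      have h := of_mem_shuffles hz hw'
      rw [Multiset.cons_swap] at h
      have h' := cons_cons b h
      rwa [Multiset.cons_swap] at h'
termination_by _ u z => u.length + z.length

theorem sum_map_length {S : Multiset (List α)} {w : List α} (h : IsInterleaving S w) :
    (S.map List.length).sum = w.length := by
  induction w generalizing S with
  | nil =>
    refine Multiset.sum_eq_zero fun n hn => ?_
    obtain ⟨s, hs, rfl⟩ := Multiset.mem_map.1 hn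
    simp [h s hs]
  | cons a w ih =>
    obtain ⟨t, T, rfl, h⟩ := h
    have := ih h
    simp only [Multiset.map_cons, Multiset.sum_cons, List.length_cons] at this ⊢
    omega

end IsInterleaving

end Interleaving

theorem IsInterleaving.le_descConcat {α : Type*} [LinearOrder α] {S : Multiset (List α)}
    {w : List α} (hw : IsInterleaving S w) (hS : ∀ x ∈ S, IsLyndonWord x) : w ≤ descConcat S := by
  induction w generalizing S with
  | nil => exact List.nil_prefix.le'
  | cons a w ih =>
    obtain ⟨t, S, rfl, hw⟩ := hw
    have hL : ∀ x ∈ (lyndonFactorization t : Multiset (List α)) + S, IsLyndonWord x := by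
      intro x hx
      rcases Multiset.mem_add.1 hx with hx | hx
      · exact (isLyndonFactorization_lyndonFactorization t).2 x hx
      · exact hS x (Multiset.mem_cons_of_mem hx)
    have hw' : IsInterleaving ((lyndonFactorization t : Multiset (List α)) + S) w :=
      IsInterleaving.of_cons_flatten (by rwa [flatten_lyndonFactorization])
    calc a :: w ≤ a :: descConcat ((lyndonFactorization t : Multiset (List α)) + S) :=
          List.cons_le_cons a (ih hw' hL)
      _ ≤ descConcat ((a :: t) ::ₘ S) :=
          (hS _ (Multiset.mem_cons_self _ _)).cons_descConcat_le
            fun q hq => hS q (Multiset.mem_cons_of_mem hq)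

section ShuffleProduct

variable {α : Type*}

theorem append_mem_shuffles_swap (u : List α) : ∀ v : List α, v ++ u ∈ shuffles u v
  | [] => by cases u <;> simp [shuffles.eq_1, shuffles.eq_2]
  | b :: v => by
    cases u with
    | nil => simp [shuffles.eq_1]
    | cons a u =>
      rw [shuffles.eq_3]
      exact Multiset.mem_add.2 (Or.inr (Multiset.mem_map_of_mem _ (append_mem_shuffles_swap _ v)))

theorem mToF_apply [DecidableEq α] (m : Multiset (List α)) (w : List α) :
    mToF m w = m.count w := by
  induction m using Multiset.induction with
  | empty => simp [mToF]
  | cons a m ih =>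
    have hcons : mToF (a ::ₘ m) = Finsupp.single a 1 + mToF m := by simp [mToF]
    rw [hcons, Finsupp.add_apply, ih, Multiset.count_cons, Finsupp.single_apply]
    by_cases h : a = w
    · simp [h, add_comm]
    · simp [h, Ne.symm h]

theorem shF_apply [DecidableEq α] (x y : List α →₀ ℝ) (w : List α) :
    shF x y w = x.sum fun a ca => y.sum fun b cb => ca * cb * (shuffles a b).count w := by
  simp only [shF, Finsupp.sum_apply, Finsupp.smul_apply, mToF_apply, smul_eq_mul]

theorem exists_mem_shuffles_of_shF_ne_zero {x y : List α →₀ ℝ} {w : List α} (h : shF x y w ≠ 0) :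
    ∃ a ∈ x.support, ∃ b ∈ y.support, w ∈ shuffles a b := by
  classical
  contrapose! h
  rw [shF_apply]
  refine Finset.sum_eq_zero fun a ha => Finset.sum_eq_zero fun b hb => ?_
  simp [Multiset.count_eq_zero.2 (h a ha b hb)]

theorem shF_nonneg {x y : List α →₀ ℝ} (hx : ∀ w, 0 ≤ x w) (hy : ∀ w, 0 ≤ y w) (w : List α) :
    0 ≤ shF x y w := by
  classical
  rw [shF_apply]
  exact Finset.sum_nonneg fun a _ => Finset.sum_nonneg fun b _ =>
    mul_nonneg (mul_nonneg (hx a) (hy b)) (Nat.cast_nonneg _)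

theorem shListProd_cons (m : List α) (l : List (List α)) :
    shListProd (m :: l) = shF (Finsupp.single m 1) (shListProd l) :=
  rfl

theorem shListProd_nonneg (l : List (List α)) (w : List α) : 0 ≤ shListProd l w := by
  classical
  have single_nonneg : ∀ m u : List α, 0 ≤ Finsupp.single m (1 : ℝ) u := fun m u => by
    rw [Finsupp.single_apply]; split_ifs <;> norm_num
  induction l generalizing w with
  | nil => exact single_nonneg _ _
  | cons m l ih => exact shF_nonneg (single_nonneg m) ih w

theorem isInterleaving_of_shListProd_ne_zero :
    ∀ {l : List (List α)} {w : List α}, shListProd l w ≠ 0 →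
      IsInterleaving (l : Multiset (List α)) w
  | [], w, h => by
    classical
    have : w = [] := by
      by_contra hw
      simp [shListProd, Ne.symm hw] at h
    subst this
    simp [IsInterleaving]
  | m :: l, w, h => by
    obtain ⟨a, ha, b, hb, hw⟩ := exists_mem_shuffles_of_shF_ne_zero h
    rw [Finsupp.support_single _ one_ne_zero, Finset.mem_singleton] at ha
    subst ha
    exact (isInterleaving_of_shListProd_ne_zero (Finsupp.mem_support_iff.1 hb)).of_mem_shuffles hw

theorem shListProd_reverse_flatten_pos : ∀ l : List (List α), 0 < shListProd l l.reverse.flatten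
  | [] => by simp [shListProd]
  | m :: l => by
    classical
    have ih := shListProd_reverse_flatten_pos l
    rw [shListProd_cons, shF_apply, Finsupp.sum_single_index (by simp), List.reverse_cons,
      List.flatten_append, List.flatten_singleton]
    have hcount : 0 < ((shuffles m l.reverse.flatten).count (l.reverse.flatten ++ m) : ℝ) := by
      exact_mod_cast Multiset.count_pos.2 (append_mem_shuffles_swap m _)
    rw [Finsupp.sum]
    refine lt_of_lt_of_le ?_ (Finset.single_le_sum (f := fun b => 1 * shListProd l b *
        ((shuffles m b).count (l.reverse.flatten ++ m) : ℝ))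
      (fun b _ => mul_nonneg (mul_nonneg zero_le_one (shListProd_nonneg l b)) (Nat.cast_nonneg _))
      (Finsupp.mem_support_iff.2 ih.ne'))
    simpa using mul_pos ih hcount

theorem IsLyndonFactorization.length_eq_and_le_of_shListProd_ne_zero [LinearOrder α]
    {l : List (List α)} (hl : IsLyndonFactorization l.reverse) {w : List α} (hw : shListProd l w ≠ 0) :
    w.length = l.reverse.flatten.length ∧ w ≤ l.reverse.flatten := by
  have hI := isInterleaving_of_shListProd_ne_zero hw
  rw [← Multiset.coe_reverse] at hI
  refine ⟨?_, ?_⟩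
  · rw [← hI.sum_map_length, List.length_flatten, Multiset.map_coe, Multiset.sum_coe]
  · rw [← descConcat_coe hl.1]
    exact hI.le_descConcat fun x hx => hl.2 x hx

end ShuffleProduct

section Triangular

variable {ι σ β R : Type*} [Ring R] [LinearOrder β] {v : ι → σ →₀ R} {e : ι → σ}
  {rank : σ → β}

theorem Finsupp.linearIndependent_of_triangular (he : Function.Injective e)
    (hdiag : ∀ i, IsUnit (v i (e i)))
    (htri : ∀ i w, v i w ≠ 0 → w ≠ e i → rank w < rank (e i)) : LinearIndependent R v := by
  classical
  rw [linearIndependent_iff']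
  intro s g hsum i hi
  by_contra hgi
  obtain ⟨i₀, hi₀, hmax⟩ :=
    (s.filter (g · ≠ 0)).exists_max_image (rank ∘ e) ⟨i, Finset.mem_filter.2 ⟨hi, hgi⟩⟩
  rw [Finset.mem_filter] at hi₀
  have hother : ∀ j ∈ s, j ≠ i₀ → g j * v j (e i₀) = 0 := by
    intro j hj hji
    by_cases hgj : g j = 0
    · rw [hgj, zero_mul]
    by_contra hne
    exact (htri j (e i₀) (right_ne_zero_of_mul hne) (he.ne hji.symm)).not_ge
      (hmax j (Finset.mem_filter.2 ⟨hj, hgj⟩))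
  have h := congrArg (· (e i₀)) hsum
  simp only [Finsupp.finsetSum_apply, Finsupp.smul_apply, smul_eq_mul, Finsupp.coe_zero,
    Pi.zero_apply] at h
  rw [Finset.sum_eq_single_of_mem i₀ hi₀.1 hother] at h
  exact hi₀.2 ((hdiag i₀).mul_left_eq_zero.1 h)

theorem Finsupp.span_eq_top_of_triangular [WellFoundedLT β] (he : Function.Surjective e)
    (hdiag : ∀ i, IsUnit (v i (e i)))
    (htri : ∀ i w, v i w ≠ 0 → w ≠ e i → rank w < rank (e i)) :
    Submodule.span R (Set.range v) = ⊤ := by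
  classical
  set V := Submodule.span R (Set.range v)
  have hsingle : ∀ w, Finsupp.single w (1 : R) ∈ V := by
    intro w
    induction w using (InvImage.wf rank wellFounded_lt).induction with
    | _ w ih =>
    obtain ⟨i, rfl⟩ := he w
    have hrest : v i - Finsupp.single (e i) (v i (e i)) ∈ V := by
      rw [← Finsupp.sum_single (v i - _)]
      refine Submodule.finsuppSum_mem _ _ _ _ fun u hu => ?_
      have hne : u ≠ e i := by rintro rfl; simp at hu
      have hvu : v i u ≠ 0 := by simpa [Finsupp.single_apply, hne.symm] using hu
      rw [← mul_one ((v i - _) u), ← smul_eq_mul, ← Finsupp.smul_single]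
      exact V.smul_mem _ (ih u (htri i u hvu hne))
    have hc : Finsupp.single (e i) (v i (e i)) ∈ V := by
      simpa using V.sub_mem (Submodule.subset_span ⟨i, rfl⟩) hrest
    have := V.smul_mem (↑(hdiag i).unit⁻¹ : R) hc
    rwa [Finsupp.smul_single, smul_eq_mul, IsUnit.val_inv_mul] at this
  rw [eq_top_iff, ← Finsupp.basisSingleOne.span_eq, Submodule.span_le]
  rintro _ ⟨w, rfl⟩
  simpa using hsingle w

end Triangular

section LexRank

variable {n : ℕ}

def lexRank : List (Fin n) → ℕ
  | [] => 0
  | a :: w => a * n ^ w.length + lexRank w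

theorem lexRank_lt_pow : ∀ w : List (Fin n), lexRank w < n ^ w.length
  | [] => by simp [lexRank]
  | a :: w => by
    have h := lexRank_lt_pow w
    have ha : (a : ℕ) + 1 ≤ n := a.isLt
    calc lexRank (a :: w) < (a + 1) * n ^ w.length := by simp only [lexRank]; linarith
      _ ≤ n * n ^ w.length := Nat.mul_le_mul_right _ ha
      _ = n ^ (a :: w).length := by rw [List.length_cons, pow_succ, mul_comm]

theorem lexRank_lt_lexRank {u v : List (Fin n)} (hlen : u.length = v.length) (h : u < v) :
    lexRank u < lexRank v := by
  induction h with
  | nil => simp at hlen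
  | cons _ ih =>
    simp only [List.length_cons, Nat.add_right_cancel_iff] at hlen
    simp only [lexRank, hlen, ih hlen, Nat.add_lt_add_iff_left]
  | @rel a₁ l₁ a₂ l₂ hab =>
    simp only [List.length_cons, Nat.add_right_cancel_iff] at hlen
    have h₁ := lexRank_lt_pow l₁
    have hab' : (a₁ : ℕ) + 1 ≤ a₂ := hab
    simp only [lexRank, hlen] at h₁ ⊢
    nlinarith

end LexRank

theorem isLyndonFactorization_reverse_iff {d : ℕ} {l : List (List (Fin d))} :
    IsLyndonFactorization l.reverse ↔ (∀ w ∈ l, IsLyndon w) ∧ List.Pairwise WordLE l := by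
  have hle : ∀ a b : List (Fin d), a ≤ b ↔ WordLE a b := fun a b => by
    rw [WordLE, le_iff_lt_or_eq]; rfl
  simp only [IsLyndonFactorization, List.pairwise_reverse, List.mem_reverse]
  rw [and_comm]
  exact and_congr Iff.rfl (List.Pairwise.iff hle)

/-- The shuffle algebra `(T(ℝ^d), ⧢)` is a free commutative
(polynomial) algebra on the Lyndon words: the shuffle products of sorted
lists of Lyndon words (i.e. the monomials in Lyndon words, each monomial
taken once) form a basis of `T(ℝ^d)`; hence every word has a unique
expression, up to ordering of the factors, as a polynomial in shuffle
products of Lyndon words. -/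
theorem shuffleAlgebra_free_on_lyndon (d : ℕ) :
    ∃ b : Module.Basis {l : List (List (Fin d)) //
        (∀ w ∈ l, IsLyndon w) ∧ List.Pairwise WordLE l} ℝ (List (Fin d) →₀ ℝ),
      ∀ i, b i = shListProd i.1 := by
  let ι := {l : List (List (Fin d)) // (∀ w ∈ l, IsLyndon w) ∧ List.Pairwise WordLE l}
  let e (i : ι) : List (Fin d) := i.1.reverse.flatten
  have hfac (i : ι) : IsLyndonFactorization i.1.reverse := isLyndonFactorization_reverse_iff.2 i.2
  have he_inj : Function.Injective e := fun i j h =>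
    Subtype.ext (List.reverse_injective ((hfac i).eq_of_flatten_eq (hfac j) h))
  have he_surj : Function.Surjective e := fun w =>
    ⟨⟨(lyndonFactorization w).reverse, isLyndonFactorization_reverse_iff.1
      (by simpa using isLyndonFactorization_lyndonFactorization w)⟩, by simp [e]⟩
  have hdiag (i : ι) : IsUnit (shListProd i.1 (e i)) :=
    (shListProd_reverse_flatten_pos i.1).ne'.isUnit
  have htri (i : ι) (w : List (Fin d)) (hw : shListProd i.1 w ≠ 0) (hne : w ≠ e i) :
      lexRank w < lexRank (e i) :=
    have ⟨hlen, hle⟩ := (hfac i).length_eq_and_le_of_shListProd_ne_zero hw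
    lexRank_lt_lexRank hlen (lt_of_le_of_ne hle hne)
  exact ⟨.mk (Finsupp.linearIndependent_of_triangular he_inj hdiag htri)
    (Finsupp.span_eq_top_of_triangular he_surj hdiag htri).ge, fun i => Module.Basis.mk_apply _ _ i⟩
end

section
/- The approximant Ξ_{s,t} := ⟨H̄_s, X_{s,t}^{≥1}⟩ built from a controlled integrand H̄ is almost additive: for all 0 ≤ s ≤ u ≤ t ≤ T, Ξ_{s,t} − Ξ_{s,u} − Ξ_{u,t} = O(ω(s,t)^{(⌊p⌋+1)/p}). Consequently the rough integral ∫ H̄ dX exists as the limit of Riemann sums Σ_{[u,v]∈π} Ξ_{u,v} along partitions with vanishing mesh. -/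
/-- A control function on `[0,T]`: continuous, vanishing on the diagonal,
nonnegative, superadditive. -/
def IsControl (ω : ℝ → ℝ → ℝ) (T : ℝ) : Prop :=
  Continuous (fun st : ℝ × ℝ => ω st.1 st.2) ∧ (∀ t, ω t t = 0) ∧
    (∀ s t, 0 ≤ ω s t) ∧
    ∀ s u t, 0 ≤ s → s ≤ u → u ≤ t → t ≤ T → ω s u + ω u t ≤ ω s t

/-- A `p`-weakly geometric rough path on `[0,T]` with values in `ℝ^d`,
in coordinates: `X s t w` is the coefficient `⟨X_{s,t}, e_w⟩` of the word `w`.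
It is truncated at level `⌊p⌋`, starts at `1` in degree `0`, is continuous,
has `ω`-Hölder regularity `ω(s,t)^{|w|/p}`, satisfies Chen's multiplicativity
identity, and the shuffle (integration-by-parts/geometricity) identity. -/
structure RoughPath (d : ℕ) (p T : ℝ) (ω : ℝ → ℝ → ℝ) where
  X : ℝ → ℝ → List (Fin d) → ℝ
  empty_eq : ∀ s t, X s t [] = 1
  zero_of_high : ∀ s t (w : List (Fin d)), ⌊p⌋₊ < w.length → X s t w = 0
  cont : ∀ w, Continuous fun st : ℝ × ℝ => X st.1 st.2 w
  regularity : ∃ C, ∀ w : List (Fin d), w.length ≤ ⌊p⌋₊ → ∀ s t, 0 ≤ s → s ≤ t → t ≤ T →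
    |X s t w| ≤ C * ω s t ^ ((w.length : ℝ) / p)
  chen : ∀ s u t, 0 ≤ s → s ≤ u → u ≤ t → t ≤ T → ∀ w : List (Fin d), w.length ≤ ⌊p⌋₊ →
    X s t w = ∑ i ∈ Finset.range (w.length + 1), X s u (w.take i) * X u t (w.drop i)
  shuffle_rel : ∀ s t, 0 ≤ s → s ≤ t → t ≤ T → ∀ a b : List (Fin d),
    a.length + b.length ≤ ⌊p⌋₊ →
    X s t a * X s t b = ((shuffles a b).map (X s t)).sum

/-- The local approximant `Ξ_{s,t} = ⟨H̄_s, X_{s,t}^{≥1}⟩` of the rough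
integral, in coordinates: the sum over words `γ` with `1 ≤ |γ| ≤ N` of
`H_s^γ · X_{s,t}^γ`. -/
noncomputable def Xi (d e N : ℕ) (X : ℝ → ℝ → List (Fin d) → ℝ)
    (H : ℝ → List (Fin d) → Fin e → ℝ) (s t : ℝ) (k : Fin e) : ℝ :=
  ∑ l ∈ Finset.Icc 1 N, ∑ v : Fin l → Fin d,
    H s (List.ofFn v) k * X s t (List.ofFn v)

/-!
Chen's relation splits `Ξ_{s,t} - Ξ_{s,u}` into `∑_β (∑_α H_s^{αβ} X_{s,u}^α) X_{u,t}^β`, so the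
defect `Ξ_{s,t} - Ξ_{s,u} - Ξ_{u,t}` is `∑_β R_{s,u}^β X_{u,t}^β`, where `R^β` is the remainder
of the controlled path at level `|β|`. It is of size `ω^{(⌊p⌋-|β|+1)/p}` and `X_{u,t}^β` of size
`ω^{|β|/p}`, so the defect is `O(ω(s,t)^θ)` with `θ = (⌊p⌋+1)/p > 1`.

The sewing lemma then follows Young: removing from a partition of `[a,b]` into `m + 1` intervals
a point whose neighbours are at `ω`-distance at most `2ω(a,b)/m` changes the Riemann sum by at
most `C (2ω(a,b)/m)^θ`, and summing over `m` gives `‖∑_π Ξ - Ξ_{a,b}‖ ≤ C 2^θ ζ(θ) ω(a,b)^θ`.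
Applied on each interval of two partitions of `ω`-mesh `≤ η` inside their common refinement,
this bounds the difference of their Riemann sums by `O(η^{θ-1})`, so the sums are Cauchy.
-/

open Finset Filter Topology

section Words

variable {A M : Type*} [Fintype A] [AddCommMonoid M]

theorem sum_ofFn_take_drop (i j : ℕ) (F : List A → List A → M) :
    ∑ v : Fin (i + j) → A, F ((List.ofFn v).take i) ((List.ofFn v).drop i) =
      ∑ α : Fin i → A, ∑ β : Fin j → A, F (List.ofFn α) (List.ofFn β) := by
  rw [← Fintype.sum_prod_type']
  refine (Fintype.sum_equiv (Fin.appendEquiv i j) _ _ fun αβ => ?_).symm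
  have hlen : (List.ofFn αβ.1).length = i := List.length_ofFn
  rw [show Fin.appendEquiv i j αβ = Fin.append αβ.1 αβ.2 from rfl, List.ofFn_fin_append,
    List.take_left' hlen, List.drop_left' hlen]

theorem sum_Icc_sum_range_sub (N : ℕ) (G : ℕ → ℕ → M) :
    ∑ l ∈ Icc 1 N, ∑ i ∈ range l, G i (l - i) =
      ∑ b ∈ Icc 1 N, ∑ a ∈ range (N - b + 1), G a b := by
  rw [sum_sigma', sum_sigma']
  refine sum_nbij' (fun x => ⟨x.1 - x.2, x.2⟩) (fun y => ⟨y.2 + y.1, y.2⟩) ?_ ?_ ?_ ?_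
    fun _ _ => rfl
  all_goals
    rintro ⟨_, _⟩ h
    simp only [mem_sigma, mem_Icc, mem_range, Sigma.mk.injEq, heq_eq_eq, and_true] at h ⊢
    omega

theorem sum_words_take_drop (N : ℕ) (F : List A → List A → M) :
    ∑ l ∈ Icc 1 N, ∑ v : Fin l → A, ∑ i ∈ range l, F ((List.ofFn v).take i) ((List.ofFn v).drop i) =
      ∑ b ∈ Icc 1 N, ∑ β : Fin b → A, ∑ a ∈ range (N - b + 1), ∑ α : Fin a → A,
        F (List.ofFn α) (List.ofFn β) := by
  have hsplit : ∀ l, ∀ i ∈ range l, ∑ v : Fin l → A, F ((List.ofFn v).take i) ((List.ofFn v).drop i)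
      = ∑ α : Fin i → A, ∑ β : Fin (l - i) → A, F (List.ofFn α) (List.ofFn β) := by
    intro l i hi
    obtain ⟨j, rfl⟩ := Nat.exists_eq_add_of_le (mem_range.1 hi).le
    rw [Nat.add_sub_cancel_left, sum_ofFn_take_drop]
  rw [sum_congr rfl fun l _ => sum_comm.trans (sum_congr rfl (hsplit l)),
    sum_Icc_sum_range_sub N fun a b => ∑ α : Fin a → A, ∑ β : Fin b → A,
      F (List.ofFn α) (List.ofFn β)]
  refine sum_congr rfl fun b _ => ?_
  rw [sum_comm]
  exact sum_congr rfl fun a _ => sum_comm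

end Words

theorem rpow_mul_rpow_le_rpow_add {a b c x y : ℝ} (ha : 0 ≤ a) (hac : a ≤ c) (hb : 0 ≤ b)
    (hbc : b ≤ c) (hx : 0 ≤ x) (hy : 0 ≤ y) : a ^ x * b ^ y ≤ c ^ (x + y) := by
  rw [Real.rpow_add_of_nonneg (ha.trans hac) hx hy]
  exact mul_le_mul (Real.rpow_le_rpow ha hac hx) (Real.rpow_le_rpow hb hbc hy)
    (Real.rpow_nonneg hb y) (Real.rpow_nonneg (ha.trans hac) x)

namespace IsControl

variable {ω : ℝ → ℝ → ℝ} {T : ℝ}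

theorem nonneg (hω : IsControl ω T) (s t : ℝ) : 0 ≤ ω s t := hω.2.2.1 s t

theorem apply_self (hω : IsControl ω T) (t : ℝ) : ω t t = 0 := hω.2.1 t

theorem add_le (hω : IsControl ω T) {s u t : ℝ} (hs : 0 ≤ s) (hsu : s ≤ u) (hut : u ≤ t)
    (htT : t ≤ T) : ω s u + ω u t ≤ ω s t :=
  hω.2.2.2 s u t hs hsu hut htT

theorem mono (hω : IsControl ω T) {s a b t : ℝ} (hs : 0 ≤ s) (hsa : s ≤ a) (hab : a ≤ b)
    (hbt : b ≤ t) (htT : t ≤ T) : ω a b ≤ ω s t := by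
  have h₁ := hω.add_le hs hsa hab (hbt.trans htT)
  have h₂ := hω.add_le hs (hsa.trans hab) hbt htT
  linarith [hω.nonneg s a, hω.nonneg b t]

end IsControl

section Approximant

variable {d e : ℕ} {p T : ℝ} {ω : ℝ → ℝ → ℝ}

theorem Xi_eq_Xi_add_sum (R : RoughPath d p T ω) (H : ℝ → List (Fin d) → Fin e → ℝ) (k : Fin e)
    {s u t : ℝ} (hs : 0 ≤ s) (hsu : s ≤ u) (hut : u ≤ t) (htT : t ≤ T) :
    Xi d e ⌊p⌋₊ R.X H s t k = Xi d e ⌊p⌋₊ R.X H s u k +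
      ∑ b ∈ Icc 1 ⌊p⌋₊, ∑ β : Fin b → Fin d,
        (∑ a ∈ range (⌊p⌋₊ - b + 1), ∑ α : Fin a → Fin d,
          H s (List.ofFn α ++ List.ofFn β) k * R.X s u (List.ofFn α)) * R.X u t (List.ofFn β) := by
  have hword : ∀ l ∈ Icc 1 ⌊p⌋₊, ∀ v : Fin l → Fin d,
      H s (List.ofFn v) k * R.X s t (List.ofFn v) =
        H s (List.ofFn v) k * R.X s u (List.ofFn v) + ∑ i ∈ range l,
          H s ((List.ofFn v).take i ++ (List.ofFn v).drop i) k *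
            R.X s u ((List.ofFn v).take i) * R.X u t ((List.ofFn v).drop i) := by
    intro l hl v
    have hlen : (List.ofFn v).length = l := List.length_ofFn
    rw [R.chen s u t hs hsu hut htT _ (hlen.trans_le (mem_Icc.1 hl).2), hlen, sum_range_succ,
      List.take_of_length_le hlen.le, List.drop_of_length_le hlen.le, R.empty_eq, mul_one,
      add_comm, mul_add, mul_sum]
    simp only [List.take_append_drop, mul_assoc]
  rw [Xi, sum_congr rfl fun l hl => sum_congr rfl fun v _ => hword l hl v]
  simp only [sum_add_distrib]
  rw [sum_words_take_drop ⌊p⌋₊ fun x y => H s (x ++ y) k * R.X s u x * R.X u t y]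
  simp only [sum_mul]
  rfl

/-- At the top level `b = ⌊p⌋` the controlledness bound is the `1/p`-regularity of `H`. -/
theorem exists_abs_sub_sum_le (hω : IsControl ω T) (R : RoughPath d p T ω)
    (H : ℝ → List (Fin d) → Fin e → ℝ)
    (hHreg : ∃ C, ∀ w : List (Fin d), 1 ≤ w.length → w.length ≤ ⌊p⌋₊ →
      ∀ s t, 0 ≤ s → s ≤ t → t ≤ T → ∀ k, |H t w k - H s w k| ≤ C * ω s t ^ (1 / p))
    (hHctrl : ∃ C, ∀ (b : ℕ) (β : Fin b → Fin d), 1 ≤ b → b ≤ ⌊p⌋₊ - 1 →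
      ∀ s t, 0 ≤ s → s ≤ t → t ≤ T → ∀ k,
        |H t (List.ofFn β) k - ∑ l ∈ range (⌊p⌋₊ - b + 1), ∑ α : Fin l → Fin d,
              H s (List.ofFn α ++ List.ofFn β) k * R.X s t (List.ofFn α)|
          ≤ C * ω s t ^ (((⌊p⌋₊ : ℝ) - b + 1) / p)) :
    ∃ C, 0 ≤ C ∧ ∀ (b : ℕ) (β : Fin b → Fin d), 1 ≤ b → b ≤ ⌊p⌋₊ →
      ∀ s t, 0 ≤ s → s ≤ t → t ≤ T → ∀ k,
        |H t (List.ofFn β) k - ∑ l ∈ range (⌊p⌋₊ - b + 1), ∑ α : Fin l → Fin d,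
              H s (List.ofFn α ++ List.ofFn β) k * R.X s t (List.ofFn α)|
          ≤ C * ω s t ^ (((⌊p⌋₊ : ℝ) - b + 1) / p) := by
  obtain ⟨C₁, hC₁⟩ := hHreg
  obtain ⟨C₂, hC₂⟩ := hHctrl
  refine ⟨max (max C₁ C₂) 0, le_max_right _ _, fun b β hb₁ hb₂ s t hs hst htT k => ?_⟩
  have hpow := Real.rpow_nonneg (hω.nonneg s t) (((⌊p⌋₊ : ℝ) - b + 1) / p)
  rcases hb₂.lt_or_eq with hb | rfl
  · exact (hC₂ b β hb₁ (by omega) s t hs hst htT k).trans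
      (mul_le_mul_of_nonneg_right ((le_max_right _ _).trans (le_max_left _ _)) hpow)
  · have hlen : (List.ofFn β).length = ⌊p⌋₊ := List.length_ofFn
    simp only [Nat.sub_self, zero_add, sum_range_one, Finset.univ_unique, List.ofFn_zero,
      List.nil_append, R.empty_eq, mul_one, sum_singleton, sub_self] at hpow ⊢
    exact (hC₁ _ (hb₁.trans_eq hlen.symm) hlen.le s t hs hst htT k).trans
      (mul_le_mul_of_nonneg_right ((le_max_left _ _).trans (le_max_left _ _)) hpow)

theorem Xi_sub_Xi_sub_Xi (R : RoughPath d p T ω) (H : ℝ → List (Fin d) → Fin e → ℝ) (k : Fin e)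
    {s u t : ℝ} (hs : 0 ≤ s) (hsu : s ≤ u) (hut : u ≤ t) (htT : t ≤ T) :
    Xi d e ⌊p⌋₊ R.X H s t k - Xi d e ⌊p⌋₊ R.X H s u k - Xi d e ⌊p⌋₊ R.X H u t k =
      ∑ b ∈ Icc 1 ⌊p⌋₊, ∑ β : Fin b → Fin d,
        -(H u (List.ofFn β) k - ∑ a ∈ range (⌊p⌋₊ - b + 1), ∑ α : Fin a → Fin d,
          H s (List.ofFn α ++ List.ofFn β) k * R.X s u (List.ofFn α)) * R.X u t (List.ofFn β) := by
  rw [Xi_eq_Xi_add_sum R H k hs hsu hut htT, add_sub_cancel_left, Xi, ← sum_sub_distrib]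
  refine sum_congr rfl fun b _ => ?_
  rw [← sum_sub_distrib]
  exact sum_congr rfl fun β _ => by ring

theorem exists_abs_Xi_sub_Xi_sub_Xi_le (hp : 1 ≤ p) (hω : IsControl ω T) (R : RoughPath d p T ω)
    (H : ℝ → List (Fin d) → Fin e → ℝ)
    (hHreg : ∃ C, ∀ w : List (Fin d), 1 ≤ w.length → w.length ≤ ⌊p⌋₊ →
      ∀ s t, 0 ≤ s → s ≤ t → t ≤ T → ∀ k, |H t w k - H s w k| ≤ C * ω s t ^ (1 / p))
    (hHctrl : ∃ C, ∀ (b : ℕ) (β : Fin b → Fin d), 1 ≤ b → b ≤ ⌊p⌋₊ - 1 →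
      ∀ s t, 0 ≤ s → s ≤ t → t ≤ T → ∀ k,
        |H t (List.ofFn β) k - ∑ l ∈ range (⌊p⌋₊ - b + 1), ∑ α : Fin l → Fin d,
              H s (List.ofFn α ++ List.ofFn β) k * R.X s t (List.ofFn α)|
          ≤ C * ω s t ^ (((⌊p⌋₊ : ℝ) - b + 1) / p)) :
    ∃ C, 0 ≤ C ∧ ∀ s u t, 0 ≤ s → s ≤ u → u ≤ t → t ≤ T → ∀ k,
      |Xi d e ⌊p⌋₊ R.X H s t k - Xi d e ⌊p⌋₊ R.X H s u k - Xi d e ⌊p⌋₊ R.X H u t k|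
        ≤ C * ω s t ^ (((⌊p⌋₊ : ℝ) + 1) / p) := by
  obtain ⟨C₁, hC₁, hrem⟩ := exists_abs_sub_sum_le hω R H hHreg hHctrl
  obtain ⟨C₂, hC₂⟩ := R.regularity
  have hp₀ : 0 < p := one_pos.trans_le hp
  set N := ⌊p⌋₊
  set θ := ((N : ℝ) + 1) / p
  refine ⟨(∑ b ∈ Icc 1 N, (Fintype.card (Fin b → Fin d) : ℝ)) * (C₁ * max C₂ 0),
    by positivity, fun s u t hs hsu hut htT k => ?_⟩
  have hterm : ∀ b ∈ Icc 1 N, ∀ β : Fin b → Fin d,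
      |-(H u (List.ofFn β) k - ∑ a ∈ range (N - b + 1), ∑ α : Fin a → Fin d,
          H s (List.ofFn α ++ List.ofFn β) k * R.X s u (List.ofFn α)) * R.X u t (List.ofFn β)|
        ≤ C₁ * max C₂ 0 * ω s t ^ θ := by
    intro b hb β
    obtain ⟨hb₁, hb₂⟩ := mem_Icc.1 hb
    have hX : |R.X u t (List.ofFn β)| ≤ max C₂ 0 * ω u t ^ ((b : ℝ) / p) := by
      have h := hC₂ (List.ofFn β) (by rwa [List.length_ofFn]) u t (hs.trans hsu) hut htT
      rw [List.length_ofFn] at h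
      exact h.trans (mul_le_mul_of_nonneg_right (le_max_left _ _)
        (Real.rpow_nonneg (hω.nonneg u t) _))
    have hx : 0 ≤ ((N : ℝ) - b + 1) / p :=
      div_nonneg (by linarith [(Nat.cast_le (α := ℝ)).2 hb₂]) hp₀.le
    calc _ = |H u (List.ofFn β) k - ∑ a ∈ range (N - b + 1), ∑ α : Fin a → Fin d,
            H s (List.ofFn α ++ List.ofFn β) k * R.X s u (List.ofFn α)| *
              |R.X u t (List.ofFn β)| := by
          rw [abs_mul, abs_neg]
      _ ≤ C₁ * ω s u ^ (((N : ℝ) - b + 1) / p) * (max C₂ 0 * ω u t ^ ((b : ℝ) / p)) :=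
          mul_le_mul (hrem b β hb₁ hb₂ s u hs hsu (hut.trans htT) k) hX (abs_nonneg _)
            (mul_nonneg hC₁ (Real.rpow_nonneg (hω.nonneg s u) _))
      _ = C₁ * max C₂ 0 * (ω s u ^ (((N : ℝ) - b + 1) / p) * ω u t ^ ((b : ℝ) / p)) := by ring
      _ ≤ C₁ * max C₂ 0 * ω s t ^ θ := by
          rw [show θ = ((N : ℝ) - b + 1) / p + (b : ℝ) / p by ring]
          exact mul_le_mul_of_nonneg_left (rpow_mul_rpow_le_rpow_add (hω.nonneg s u)
            (hω.mono hs le_rfl hsu hut htT) (hω.nonneg u t) (hω.mono hs hsu hut le_rfl htT) hx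
            (by positivity)) (by positivity)
  rw [Xi_sub_Xi_sub_Xi R H k hs hsu hut htT]
  calc _ ≤ ∑ b ∈ Icc 1 N, ∑ _β : Fin b → Fin d, C₁ * max C₂ 0 * ω s t ^ θ :=
        (abs_sum_le_sum_abs _ _).trans <| sum_le_sum fun b hb =>
          (abs_sum_le_sum_abs _ _).trans <| sum_le_sum fun β _ => hterm b hb β
    _ = _ := by simp only [sum_const, card_univ, nsmul_eq_mul, sum_mul, mul_assoc]

end Approximant

/-- Monotonicity is asked of the whole sequence; only the values up to `m` matter. -/
structure IsPartition (τ : ℕ → ℝ) (m : ℕ) (a b : ℝ) : Prop where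
  monotone : Monotone τ
  zero : τ 0 = a
  last : τ m = b

theorem IsPartition.left_le {τ : ℕ → ℝ} {m : ℕ} {a b : ℝ} (hτ : IsPartition τ m a b) (i : ℕ) :
    a ≤ τ i :=
  hτ.zero ▸ hτ.monotone (Nat.zero_le i)

theorem IsPartition.le_right {τ : ℕ → ℝ} {m : ℕ} {a b : ℝ} (hτ : IsPartition τ m a b) {i : ℕ}
    (hi : i ≤ m) : τ i ≤ b :=
  hτ.last ▸ hτ.monotone hi

def Refines (ρ : ℕ → ℝ) (n : ℕ) (τ : ℕ → ℝ) (m : ℕ) : Prop :=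
  ∃ c : ℕ → ℕ, Monotone c ∧ c 0 = 0 ∧ c m = n ∧ ∀ i ≤ m, ρ (c i) = τ i

def riemannSum {E : Type*} [AddCommMonoid E] (Ξ : ℝ → ℝ → E) (τ : ℕ → ℝ) (m : ℕ) : E :=
  ∑ i ∈ range m, Ξ (τ i) (τ (i + 1))

def IsAlmostAdditive {E : Type*} [SeminormedAddCommGroup E] (ω : ℝ → ℝ → ℝ) (T C θ : ℝ)
    (Ξ : ℝ → ℝ → E) : Prop :=
  ∀ s u t, 0 ≤ s → s ≤ u → u ≤ t → t ≤ T → ‖Ξ s t - Ξ s u - Ξ u t‖ ≤ C * ω s t ^ θ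

theorem sum_range_eq_sum_sum_Ico {M : Type*} [AddCommMonoid M] (f : ℕ → M) {c : ℕ → ℕ}
    (hc : Monotone c) (hc₀ : c 0 = 0) (m : ℕ) :
    ∑ j ∈ range (c m), f j = ∑ i ∈ range m, ∑ j ∈ Ico (c i) (c (i + 1)), f j := by
  induction m with
  | zero => simp [hc₀]
  | succ m ih => rw [sum_range_succ, ← ih, sum_range_add_sum_Ico _ (hc m.le_succ)]

theorem riemannSum_skip {E : Type*} [AddCommGroup E] (Ξ : ℝ → ℝ → E) (τ : ℕ → ℝ) {i m : ℕ}
    (him : i < m) :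
    riemannSum Ξ (fun j => τ (if j ≤ i then j else j + 1)) m = riemannSum Ξ τ (m + 1) -
      (Ξ (τ i) (τ (i + 1)) + Ξ (τ (i + 1)) (τ (i + 2)) - Ξ (τ i) (τ (i + 2))) := by
  induction m, him using Nat.le_induction with
  | base =>
    have hlow : riemannSum Ξ (fun j => τ (if j ≤ i then j else j + 1)) i = riemannSum Ξ τ i :=
      sum_congr rfl fun j hj => by
        dsimp only
        rw [if_pos (mem_range.1 hj).le, if_pos (Nat.succ_le_of_lt (mem_range.1 hj))]
    simp only [riemannSum, sum_range_succ] at hlow ⊢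
    rw [hlow, if_pos le_rfl, if_neg (by omega)]
    abel
  | succ m hm ih =>
    simp only [riemannSum, sum_range_succ _ m, sum_range_succ _ (m + 1)] at ih ⊢
    rw [ih, if_neg (by omega), if_neg (by omega)]
    abel

namespace IsControl

variable {ω : ℝ → ℝ → ℝ} {T : ℝ}

theorem sum_le_of_monotone (hω : IsControl ω T) {τ : ℕ → ℝ} (hτ : Monotone τ) (h₀ : 0 ≤ τ 0)
    {m : ℕ} (hm : τ m ≤ T) : ∑ i ∈ range m, ω (τ i) (τ (i + 1)) ≤ ω (τ 0) (τ m) := by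
  induction m with
  | zero => simp [hω.apply_self]
  | succ m ih =>
    rw [sum_range_succ]
    linarith [ih ((hτ m.le_succ).trans hm), hω.add_le h₀ (hτ m.zero_le) (hτ m.le_succ) hm]

theorem sum_skip_le_of_monotone (hω : IsControl ω T) {τ : ℕ → ℝ} (hτ : Monotone τ) (h₀ : 0 ≤ τ 0)
    {n : ℕ} (hn : τ (n + 1) ≤ T) :
    ∑ i ∈ range n, ω (τ i) (τ (i + 2)) ≤ ω (τ 0) (τ n) + ω (τ 0) (τ (n + 1)) := by
  induction n with
  | zero => simp [add_nonneg, hω.nonneg]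
  | succ n ih =>
    rw [sum_range_succ]
    linarith [ih ((hτ (n + 1).le_succ).trans hn),
      hω.add_le h₀ (hτ n.zero_le) (hτ (by omega : n ≤ n + 2)) hn]

theorem exists_skip_le (hω : IsControl ω T) {τ : ℕ → ℝ} {m : ℕ} {a b : ℝ}
    (hτ : IsPartition τ (m + 1) a b) (ha : 0 ≤ a) (hb : b ≤ T) (hm : 0 < m) :
    ∃ i < m, ω (τ i) (τ (i + 2)) ≤ 2 * ω a b / m := by
  have hsum : ∑ i ∈ range m, ω (τ i) (τ (i + 2)) ≤ ∑ _i ∈ range m, 2 * ω a b / m := by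
    have h := hω.sum_skip_le_of_monotone hτ.monotone (hτ.zero ▸ ha) (hτ.last ▸ hb)
    rw [hτ.zero, hτ.last] at h
    have hmono := hω.mono ha le_rfl (hτ.left_le m) (hτ.le_right m.le_succ) hb
    rw [sum_const, card_range, nsmul_eq_mul, mul_div_cancel₀ _ (by positivity)]
    linarith
  obtain ⟨i, hi, hle⟩ := exists_le_of_sum_le (nonempty_range_iff.2 hm.ne') hsum
  exact ⟨i, mem_range.1 hi, hle⟩

theorem sum_rpow_le (hω : IsControl ω T) {θ η : ℝ} (hθ : 1 ≤ θ) (hη : 0 ≤ η) {τ : ℕ → ℝ} {m : ℕ}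
    {a b : ℝ} (hτ : IsPartition τ m a b) (ha : 0 ≤ a) (hb : b ≤ T)
    (hτη : ∀ i < m, ω (τ i) (τ (i + 1)) ≤ η) :
    ∑ i ∈ range m, ω (τ i) (τ (i + 1)) ^ θ ≤ η ^ (θ - 1) * ω a b := by
  calc ∑ i ∈ range m, ω (τ i) (τ (i + 1)) ^ θ
      ≤ ∑ i ∈ range m, η ^ (θ - 1) * ω (τ i) (τ (i + 1)) := by
        refine sum_le_sum fun i hi => ?_
        have hω₀ := hω.nonneg (τ i) (τ (i + 1))
        calc ω (τ i) (τ (i + 1)) ^ θ = ω (τ i) (τ (i + 1)) ^ (θ - 1) * ω (τ i) (τ (i + 1)) := by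
              rw [← Real.rpow_add_one' hω₀ (by linarith), sub_add_cancel]
          _ ≤ η ^ (θ - 1) * ω (τ i) (τ (i + 1)) := by
              gcongr
              exact hτη i (mem_range.1 hi)
    _ = η ^ (θ - 1) * ∑ i ∈ range m, ω (τ i) (τ (i + 1)) := (mul_sum _ _ _).symm
    _ ≤ η ^ (θ - 1) * ω a b := by
        have h := hω.sum_le_of_monotone hτ.monotone (hτ.zero ▸ ha) (hτ.last ▸ hb)
        rw [hτ.zero, hτ.last] at h
        exact mul_le_mul_of_nonneg_left h (Real.rpow_nonneg hη _)

theorem exists_pos_forall_sub_lt (hω : IsControl ω T) {η : ℝ} (hη : 0 < η) :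
    ∃ δ > 0, ∀ u v, 0 ≤ u → u ≤ v → v ≤ T → v - u < δ → ω u v < η := by
  have hK : IsCompact (Set.Icc 0 T ×ˢ Set.Icc 0 T) := isCompact_Icc.prod isCompact_Icc
  have hunif := hK.uniformContinuousOn_of_continuous hω.1.continuousOn
  obtain ⟨δ, hδ, hclose⟩ := Metric.uniformContinuousOn_iff.1 hunif η hη
  refine ⟨δ, hδ, fun u v hu huv hvT hvu => ?_⟩
  have hdist : dist (u, v) (v, v) < δ := by
    rw [Prod.dist_eq, dist_self, Real.dist_eq, abs_of_nonpos (by linarith)]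
    exact max_lt (by linarith) hδ
  have h := hclose (u, v) ⟨⟨hu, huv.trans hvT⟩, hu.trans huv, hvT⟩ (v, v)
    ⟨⟨hu.trans huv, hvT⟩, hu.trans huv, hvT⟩ hdist
  rwa [Real.dist_eq, hω.apply_self, sub_zero, abs_of_nonneg (hω.nonneg u v)] at h

end IsControl

namespace IsAlmostAdditive

variable {E : Type*} [NormedAddCommGroup E] {ω : ℝ → ℝ → ℝ} {T C θ : ℝ} {Ξ : ℝ → ℝ → E}

theorem apply_self (hΞ : IsAlmostAdditive ω T C θ Ξ) (hω : IsControl ω T) (hθ : 0 < θ) {a : ℝ}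
    (ha : 0 ≤ a) (haT : a ≤ T) : Ξ a a = 0 := by
  have h := hΞ a a a ha le_rfl le_rfl haT
  rwa [hω.apply_self, Real.zero_rpow hθ.ne', mul_zero, sub_self, zero_sub, norm_neg,
    norm_le_zero_iff] at h

theorem exists_norm_riemannSum_sub_le (hΞ : IsAlmostAdditive ω T C θ Ξ) (hω : IsControl ω T)
    (hθ : 0 ≤ θ) (hC : 0 ≤ C) {τ : ℕ → ℝ} {m : ℕ} {a b : ℝ} (hτ : IsPartition τ (m + 1) a b)
    (ha : 0 ≤ a) (hb : b ≤ T) (hm : 0 < m) :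
    ∃ τ', IsPartition τ' m a b ∧
      ‖riemannSum Ξ τ (m + 1) - riemannSum Ξ τ' m‖ ≤ C * (2 * ω a b / m) ^ θ := by
  obtain ⟨i, him, hi⟩ := hω.exists_skip_le hτ ha hb hm
  refine ⟨fun j => τ (if j ≤ i then j else j + 1), ⟨hτ.monotone.comp fun j₁ j₂ h => ?_, ?_, ?_⟩, ?_⟩
  · split_ifs <;> omega
  · simp [hτ.zero]
  · simp [if_neg (show ¬m ≤ i by omega), hτ.last]
  · rw [riemannSum_skip Ξ τ him, sub_sub_cancel, ← norm_neg]
    calc ‖-(Ξ (τ i) (τ (i + 1)) + Ξ (τ (i + 1)) (τ (i + 2)) - Ξ (τ i) (τ (i + 2)))‖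
        = ‖Ξ (τ i) (τ (i + 2)) - Ξ (τ i) (τ (i + 1)) - Ξ (τ (i + 1)) (τ (i + 2))‖ := by
          congr 1; abel
      _ ≤ C * ω (τ i) (τ (i + 2)) ^ θ :=
          hΞ _ _ _ (ha.trans (hτ.left_le i)) (hτ.monotone (i.le_succ))
            (hτ.monotone (i + 1).le_succ) ((hτ.le_right (by omega)).trans hb)
      _ ≤ C * (2 * ω a b / m) ^ θ := by
          gcongr
          exact hω.nonneg _ _

theorem norm_riemannSum_sub_le_sum (hΞ : IsAlmostAdditive ω T C θ Ξ) (hω : IsControl ω T)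
    (hθ : 0 < θ) (hC : 0 ≤ C) {a b : ℝ} (ha : 0 ≤ a) (hb : b ≤ T) {m : ℕ} :
    ∀ {τ : ℕ → ℝ}, IsPartition τ m a b →
      ‖riemannSum Ξ τ m - Ξ a b‖ ≤ C * 2 ^ θ * (∑ k ∈ Ico 1 m, (k : ℝ) ^ (-θ)) * ω a b ^ θ := by
  induction m with
  | zero =>
    intro τ hτ
    obtain rfl : a = b := hτ.zero.symm.trans hτ.last
    simp [riemannSum, hΞ.apply_self hω hθ ha hb]
  | succ m ih =>
    intro τ hτ
    rcases Nat.eq_zero_or_pos m with rfl | hm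
    · simp [riemannSum, hτ.zero, hτ.last]
    obtain ⟨τ', hτ', hremove⟩ := hΞ.exists_norm_riemannSum_sub_le hω hθ.le hC hτ ha hb hm
    have hω₀ := hω.nonneg a b
    have hcost : C * (2 * ω a b / m) ^ θ = C * 2 ^ θ * (m : ℝ) ^ (-θ) * ω a b ^ θ := by
      rw [Real.div_rpow (by positivity) m.cast_nonneg, Real.mul_rpow zero_le_two hω₀,
        Real.rpow_neg m.cast_nonneg, div_eq_mul_inv]
      ring
    calc ‖riemannSum Ξ τ (m + 1) - Ξ a b‖
        ≤ ‖riemannSum Ξ τ (m + 1) - riemannSum Ξ τ' m‖ + ‖riemannSum Ξ τ' m - Ξ a b‖ :=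
          norm_sub_le_norm_sub_add_norm_sub _ _ _
      _ ≤ C * 2 ^ θ * (m : ℝ) ^ (-θ) * ω a b ^ θ +
            C * 2 ^ θ * (∑ k ∈ Ico 1 m, (k : ℝ) ^ (-θ)) * ω a b ^ θ :=
          add_le_add (hremove.trans hcost.le) (ih hτ')
      _ = C * 2 ^ θ * (∑ k ∈ Ico 1 (m + 1), (k : ℝ) ^ (-θ)) * ω a b ^ θ := by
          rw [sum_Ico_succ_top hm]
          ring

theorem norm_riemannSum_sub_le (hΞ : IsAlmostAdditive ω T C θ Ξ) (hω : IsControl ω T)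
    (hθ : 1 < θ) (hC : 0 ≤ C) {a b : ℝ} (ha : 0 ≤ a) (hb : b ≤ T) {m : ℕ} {τ : ℕ → ℝ}
    (hτ : IsPartition τ m a b) :
    ‖riemannSum Ξ τ m - Ξ a b‖ ≤ C * 2 ^ θ * (∑' k : ℕ, (k : ℝ) ^ (-θ)) * ω a b ^ θ := by
  refine (hΞ.norm_riemannSum_sub_le_sum hω (by linarith) hC ha hb hτ).trans ?_
  gcongr
  · exact Real.rpow_nonneg (hω.nonneg a b) θ
  · exact (Real.summable_nat_rpow.2 (by linarith)).sum_le_tsum _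
      fun k _ => Real.rpow_nonneg k.cast_nonneg _

end IsAlmostAdditive

section Refinement

variable {E : Type*} [NormedAddCommGroup E] {ω : ℝ → ℝ → ℝ} {T K θ : ℝ} {Ξ : ℝ → ℝ → E}

theorem norm_riemannSum_sub_le_of_refines
    (hmax : ∀ (m : ℕ) (τ : ℕ → ℝ) (a b : ℝ), 0 ≤ a → b ≤ T → IsPartition τ m a b →
      ‖riemannSum Ξ τ m - Ξ a b‖ ≤ K * ω a b ^ θ)
    {a b : ℝ} (ha : 0 ≤ a) (hb : b ≤ T) {τ ρ : ℕ → ℝ} {m n : ℕ} (hτ : IsPartition τ m a b)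
    (hρ : Monotone ρ) (hρτ : Refines ρ n τ m) :
    ‖riemannSum Ξ ρ n - riemannSum Ξ τ m‖ ≤ ∑ i ∈ range m, K * ω (τ i) (τ (i + 1)) ^ θ := by
  obtain ⟨c, hc, hc₀, hcm, hcτ⟩ := hρτ
  rw [← hcm, riemannSum, sum_range_eq_sum_sum_Ico _ hc hc₀, riemannSum, ← sum_sub_distrib]
  refine (norm_sum_le _ _).trans (sum_le_sum fun i hi => ?_)
  have him := mem_range.1 hi
  have hblock : IsPartition (fun r => ρ (c i + r)) (c (i + 1) - c i) (τ i) (τ (i + 1)) :=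
    ⟨hρ.comp fun _ _ h => by omega, hcτ i him.le,
      by rw [Nat.add_sub_cancel' (hc i.le_succ)]; exact hcτ (i + 1) him⟩
  rw [sum_Ico_eq_sum_range]
  exact hmax _ _ _ _ (ha.trans (hτ.left_le i)) ((hτ.le_right him).trans hb) hblock

theorem refines_of_subset {F : Finset ℝ} {n : ℕ} (e : Fin (n + 1) ≃o F) {a b : ℝ}
    (hF : ∀ x ∈ F, a ≤ x ∧ x ≤ b) {γ : ℕ → ℝ} {L : ℕ} (hγ : IsPartition γ L a b)
    (hγF : ∀ i ≤ L, γ i ∈ F) : Refines (fun j => (e (Fin.clamp j n) : ℝ)) n γ L := by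
  set c : ℕ → ℕ := fun i => e.symm ⟨γ (min i L), hγF _ (min_le_right i L)⟩
  have hclamp : ∀ i, Fin.clamp (c i) n = e.symm ⟨γ (min i L), hγF _ (min_le_right i L)⟩ :=
    fun i => Fin.ext (min_eq_left (Nat.lt_succ_iff.1 (Fin.is_lt _)))
  refine ⟨c, fun i j h => e.symm.monotone (Subtype.mk_le_mk.2 (hγ.monotone (min_le_min_right L h))),
    ?_, ?_, fun i hi => ?_⟩
  · have h : e.symm ⟨γ (min 0 L), hγF _ (min_le_right 0 L)⟩ ≤ 0 := by
      rw [OrderIso.symm_apply_le, Subtype.mk_le_mk, Nat.zero_min, hγ.zero]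
      exact (hF _ (e 0).2).1
    simp only [c, Fin.le_zero_iff.1 h, Fin.val_zero]
  · have h : Fin.last n ≤ e.symm ⟨γ (min L L), hγF _ (min_le_right L L)⟩ := by
      rw [OrderIso.le_symm_apply, Subtype.mk_le_mk, min_self, hγ.last]
      exact (hF _ (e _).2).2
    simp only [c, Fin.last_le_iff.1 h, Fin.val_last]
  · simp only [hclamp, OrderIso.apply_symm_apply, min_eq_left hi]

theorem exists_refines_refines {τ σ : ℕ → ℝ} {m M : ℕ} {a b : ℝ} (hτ : IsPartition τ m a b)
    (hσ : IsPartition σ M a b) :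
    ∃ (ρ : ℕ → ℝ) (n : ℕ), Monotone ρ ∧ Refines ρ n τ m ∧ Refines ρ n σ M := by
  classical
  set F := (range (m + 1)).image τ ∪ (range (M + 1)).image σ
  have hτF : ∀ i ≤ m, τ i ∈ F := fun i hi =>
    mem_union_left _ (mem_image_of_mem τ (mem_range.2 (Nat.lt_succ_of_le hi)))
  have hσF : ∀ i ≤ M, σ i ∈ F := fun i hi =>
    mem_union_right _ (mem_image_of_mem σ (mem_range.2 (Nat.lt_succ_of_le hi)))
  have hF : ∀ x ∈ F, a ≤ x ∧ x ≤ b := by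
    intro x hx
    rcases mem_union.1 hx with hx | hx <;> obtain ⟨i, hi, rfl⟩ := mem_image.1 hx
    · exact ⟨hτ.left_le i, hτ.le_right (Nat.lt_succ_iff.1 (mem_range.1 hi))⟩
    · exact ⟨hσ.left_le i, hσ.le_right (Nat.lt_succ_iff.1 (mem_range.1 hi))⟩
  have hcard : F.card = F.card - 1 + 1 :=
    (Nat.succ_pred_eq_of_pos (card_pos.2 ⟨τ 0, hτF 0 m.zero_le⟩)).symm
  set e := F.orderIsoOfFin hcard
  exact ⟨_, _, fun i j h => e.monotone (Fin.clamp_monotone h), refines_of_subset e hF hτ hτF,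
    refines_of_subset e hF hσ hσF⟩

end Refinement

theorem norm_riemannSum_sub_riemannSum_le {E : Type*} [NormedAddCommGroup E] {ω : ℝ → ℝ → ℝ}
    {T K θ η : ℝ} {Ξ : ℝ → ℝ → E} (hω : IsControl ω T) (hθ : 1 ≤ θ) (hK : 0 ≤ K) (hη : 0 ≤ η)
    (hmax : ∀ (m : ℕ) (τ : ℕ → ℝ) (a b : ℝ), 0 ≤ a → b ≤ T → IsPartition τ m a b →
      ‖riemannSum Ξ τ m - Ξ a b‖ ≤ K * ω a b ^ θ)
    {a b : ℝ} (ha : 0 ≤ a) (hb : b ≤ T) {τ σ : ℕ → ℝ} {m M : ℕ}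
    (hτ : IsPartition τ m a b) (hσ : IsPartition σ M a b)
    (hτη : ∀ i < m, ω (τ i) (τ (i + 1)) ≤ η) (hση : ∀ i < M, ω (σ i) (σ (i + 1)) ≤ η) :
    ‖riemannSum Ξ τ m - riemannSum Ξ σ M‖ ≤ 2 * K * η ^ (θ - 1) * ω a b := by
  obtain ⟨ρ, n, hρ, hρτ, hρσ⟩ := exists_refines_refines hτ hσ
  have hτρ := norm_riemannSum_sub_le_of_refines hmax ha hb hτ hρ hρτ
  have hσρ := norm_riemannSum_sub_le_of_refines hmax ha hb hσ hρ hρσ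
  rw [← mul_sum, norm_sub_rev] at hτρ
  rw [← mul_sum] at hσρ
  have hτsum := mul_le_mul_of_nonneg_left (hω.sum_rpow_le hθ hη hτ ha hb hτη) hK
  have hσsum := mul_le_mul_of_nonneg_left (hω.sum_rpow_le hθ hη hσ ha hb hση) hK
  calc ‖riemannSum Ξ τ m - riemannSum Ξ σ M‖
      ≤ ‖riemannSum Ξ τ m - riemannSum Ξ ρ n‖ + ‖riemannSum Ξ ρ n - riemannSum Ξ σ M‖ :=
        norm_sub_le_norm_sub_add_norm_sub _ _ _
    _ ≤ 2 * K * η ^ (θ - 1) * ω a b := by linarith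

noncomputable def uniformPartition (T : ℝ) (n i : ℕ) : ℝ := T * min ((i : ℝ) / (n + 1)) 1

theorem isPartition_uniformPartition {T : ℝ} (hT : 0 ≤ T) (n : ℕ) :
    IsPartition (uniformPartition T n) (n + 1) 0 T where
  monotone i j h := by
    unfold uniformPartition
    gcongr
  zero := by simp [uniformPartition]
  last := by rw [uniformPartition, Nat.cast_succ, div_self (by positivity), min_self, mul_one]

theorem uniformPartition_sub_le {T : ℝ} (hT : 0 ≤ T) (n i : ℕ) :
    uniformPartition T n (i + 1) - uniformPartition T n i ≤ T * (1 / (n + 1)) := by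
  have hmin : min (((i + 1 : ℕ) : ℝ) / (n + 1)) 1 ≤ min ((i : ℝ) / (n + 1)) 1 + 1 / (n + 1) := by
    rw [← min_add_add_right]
    refine min_le_min (le_of_eq ?_) (le_add_of_nonneg_right (by positivity))
    push_cast
    ring
  unfold uniformPartition
  nlinarith

namespace IsAlmostAdditive

variable {E : Type*} [NormedAddCommGroup E] {ω : ℝ → ℝ → ℝ} {T C θ : ℝ} {Ξ : ℝ → ℝ → E}

theorem exists_forall_norm_riemannSum_sub_lt (hΞ : IsAlmostAdditive ω T C θ Ξ)
    (hω : IsControl ω T) (hθ : 1 < θ) (hC : 0 ≤ C) {ε : ℝ} (hε : 0 < ε) :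
    ∃ δ > 0, ∀ (m M : ℕ) (τ σ : ℕ → ℝ), IsPartition τ m 0 T → IsPartition σ M 0 T →
      (∀ i < m, τ (i + 1) - τ i < δ) → (∀ i < M, σ (i + 1) - σ i < δ) →
      ‖riemannSum Ξ τ m - riemannSum Ξ σ M‖ < ε := by
  set K := C * 2 ^ θ * ∑' k : ℕ, (k : ℝ) ^ (-θ)
  have hK : 0 ≤ K := by
    have : 0 ≤ ∑' k : ℕ, (k : ℝ) ^ (-θ) := tsum_nonneg fun k => Real.rpow_nonneg k.cast_nonneg _
    positivity
  have hsmall : Tendsto (fun η : ℝ => 2 * K * η ^ (θ - 1) * ω 0 T) (𝓝[>] 0) (𝓝 0) := by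
    have h := ((Real.continuousAt_rpow_const 0 (θ - 1) (Or.inr (by linarith))).const_mul
      (2 * K)).mul_const (ω 0 T)
    rw [ContinuousAt, Real.zero_rpow (by linarith), mul_zero, zero_mul] at h
    exact h.mono_left nhdsWithin_le_nhds
  obtain ⟨η, hηε, hη⟩ := ((hsmall.eventually (gt_mem_nhds hε)).and self_mem_nhdsWithin).exists
  obtain ⟨δ, hδ, hωδ⟩ := hω.exists_pos_forall_sub_lt hη
  have hmesh : ∀ {m : ℕ} {τ : ℕ → ℝ}, IsPartition τ m 0 T → (∀ i < m, τ (i + 1) - τ i < δ) →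
      ∀ i < m, ω (τ i) (τ (i + 1)) ≤ η := fun hτ hτδ i hi =>
    (hωδ _ _ (hτ.left_le i) (hτ.monotone i.le_succ) (hτ.le_right hi) (hτδ i hi)).le
  refine ⟨δ, hδ, fun m M τ σ hτ hσ hτδ hσδ => lt_of_le_of_lt ?_ hηε⟩
  exact norm_riemannSum_sub_riemannSum_le hω hθ.le hK (Set.mem_Ioi.1 hη).le
    (fun _ _ _ _ ha hb hτ => hΞ.norm_riemannSum_sub_le hω hθ hC ha hb hτ) le_rfl le_rfl hτ hσ
    (hmesh hτ hτδ) (hmesh hσ hσδ)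

theorem exists_tendsto_riemannSum [CompleteSpace E] (hΞ : IsAlmostAdditive ω T C θ Ξ)
    (hω : IsControl ω T) (hT : 0 ≤ T) (hθ : 1 < θ) (hC : 0 ≤ C) :
    ∃ I : E, ∀ ε > 0, ∃ δ > 0, ∀ (m : ℕ) (τ : ℕ → ℝ), IsPartition τ m 0 T →
      (∀ i < m, τ (i + 1) - τ i < δ) → ‖riemannSum Ξ τ m - I‖ < ε := by
  set S : ℕ → E := fun n => riemannSum Ξ (uniformPartition T n) (n + 1)
  have hfine : ∀ δ > 0, ∀ᶠ n in atTop,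
      ∀ i < n + 1, uniformPartition T n (i + 1) - uniformPartition T n i < δ := by
    intro δ hδ
    have h := (tendsto_one_div_add_atTop_nhds_zero_nat (𝕜 := ℝ)).const_mul T
    rw [mul_zero] at h
    filter_upwards [h.eventually (gt_mem_nhds hδ)] with n hn i _
    exact (uniformPartition_sub_le hT n i).trans_lt hn
  have hcauchy : CauchySeq S := by
    refine Metric.cauchySeq_iff'.2 fun ε hε => ?_
    obtain ⟨δ, hδ, hclose⟩ := hΞ.exists_forall_norm_riemannSum_sub_lt hω hθ hC hε
    obtain ⟨N, hN⟩ := eventually_atTop.1 (hfine δ hδ)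
    exact ⟨N, fun n hn => by
      rw [dist_eq_norm]
      exact hclose _ _ _ _ (isPartition_uniformPartition hT n) (isPartition_uniformPartition hT N)
        (hN n hn) (hN N le_rfl)⟩
  obtain ⟨I, hI⟩ := cauchySeq_tendsto_of_complete hcauchy
  refine ⟨I, fun ε hε => ?_⟩
  obtain ⟨δ, hδ, hclose⟩ := hΞ.exists_forall_norm_riemannSum_sub_lt hω hθ hC (half_pos hε)
  refine ⟨δ, hδ, fun m τ hτ hτδ => ?_⟩
  have hlim : ‖riemannSum Ξ τ m - I‖ ≤ ε / 2 :=
    le_of_tendsto (tendsto_const_nhds.sub hI).norm <| (hfine δ hδ).mono fun n hn =>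
      (hclose _ _ _ _ hτ (isPartition_uniformPartition hT n) hτδ hn).le
  linarith

end IsAlmostAdditive

theorem Fin.clamp_val_eq_castSucc {m : ℕ} (i : Fin m) : Fin.clamp i m = i.castSucc :=
  Fin.ext (min_eq_left i.is_lt.le)

theorem Fin.clamp_val_add_one_eq_succ {m : ℕ} (i : Fin m) : Fin.clamp (i + 1) m = i.succ :=
  Fin.ext (min_eq_left i.is_lt)

theorem isPartition_comp_clamp {m : ℕ} {τ : Fin (m + 1) → ℝ} {a b : ℝ} (hτ : Monotone τ)
    (h₀ : τ 0 = a) (hm : τ (Fin.last m) = b) : IsPartition (fun i => τ (Fin.clamp i m)) m a b where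
  monotone := hτ.comp Fin.clamp_monotone
  zero := by rwa [show Fin.clamp 0 m = 0 from Fin.ext (Nat.zero_min m)]
  last := by rwa [Fin.clamp_eq_last m m le_rfl]

theorem riemannSum_comp_clamp {E : Type*} [AddCommMonoid E] (Ξ : ℝ → ℝ → E) {m : ℕ}
    (τ : Fin (m + 1) → ℝ) :
    riemannSum Ξ (fun i => τ (Fin.clamp i m)) m = ∑ i : Fin m, Ξ (τ i.castSucc) (τ i.succ) := by
  rw [riemannSum, ← Fin.sum_univ_eq_sum_range]
  exact sum_congr rfl fun i _ => by rw [Fin.clamp_val_eq_castSucc, Fin.clamp_val_add_one_eq_succ]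

theorem controlled_integrand_almost_additive_and_integral_exists_general
    (d e : ℕ) (p T : ℝ) (hp : 1 ≤ p) (hT : 0 ≤ T)
    (ω : ℝ → ℝ → ℝ) (hω : IsControl ω T) (R : RoughPath d p T ω)
    (H : ℝ → List (Fin d) → Fin e → ℝ)
    (hHreg : ∃ C, ∀ w : List (Fin d), 1 ≤ w.length → w.length ≤ ⌊p⌋₊ →
      ∀ s t, 0 ≤ s → s ≤ t → t ≤ T → ∀ k,
        |H t w k - H s w k| ≤ C * ω s t ^ (1 / p))
    (hHctrl : ∃ C, ∀ (b : ℕ) (β : Fin b → Fin d), 1 ≤ b → b ≤ ⌊p⌋₊ - 1 →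
      ∀ s t, 0 ≤ s → s ≤ t → t ≤ T → ∀ k,
        |H t (List.ofFn β) k -
            ∑ l ∈ Finset.range (⌊p⌋₊ - b + 1), ∑ α : Fin l → Fin d,
              H s (List.ofFn α ++ List.ofFn β) k * R.X s t (List.ofFn α)|
          ≤ C * ω s t ^ (((⌊p⌋₊ : ℝ) - b + 1) / p)) :
    (∃ C, ∀ s u t, 0 ≤ s → s ≤ u → u ≤ t → t ≤ T → ∀ k,
        |Xi d e ⌊p⌋₊ R.X H s t k - Xi d e ⌊p⌋₊ R.X H s u k - Xi d e ⌊p⌋₊ R.X H u t k|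
          ≤ C * ω s t ^ (((⌊p⌋₊ : ℝ) + 1) / p)) ∧
    ∃ I : Fin e → ℝ, ∀ ε > (0 : ℝ), ∃ δ > (0 : ℝ),
      ∀ (m : ℕ) (τ : Fin (m + 1) → ℝ), Monotone τ → τ 0 = 0 → τ (Fin.last m) = T →
        (∀ i : Fin m, τ i.succ - τ i.castSucc < δ) → ∀ k,
          |(∑ i : Fin m, Xi d e ⌊p⌋₊ R.X H (τ i.castSucc) (τ i.succ) k) - I k| < ε := by
  obtain ⟨C, hC, hadd⟩ := exists_abs_Xi_sub_Xi_sub_Xi_le hp hω R H hHreg hHctrl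
  have hθ : 1 < ((⌊p⌋₊ : ℝ) + 1) / p := by
    rw [one_lt_div (one_pos.trans_le hp)]
    exact Nat.lt_floor_add_one p
  set Ξ : ℝ → ℝ → Fin e → ℝ := fun s t k => Xi d e ⌊p⌋₊ R.X H s t k
  have hΞ : IsAlmostAdditive ω T C (((⌊p⌋₊ : ℝ) + 1) / p) Ξ := fun s u t hs hsu hut htT =>
    (pi_norm_le_iff_of_nonneg (mul_nonneg hC (Real.rpow_nonneg (hω.nonneg s t) _))).2
      fun k => (Real.norm_eq_abs _).trans_le (hadd s u t hs hsu hut htT k)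
  obtain ⟨I, hI⟩ := hΞ.exists_tendsto_riemannSum hω hT hθ hC
  refine ⟨⟨C, hadd⟩, I, fun ε hε => ?_⟩
  obtain ⟨δ, hδ, hτI⟩ := hI ε hε
  refine ⟨δ, hδ, fun m τ hτ h₀ hm hmesh k => ?_⟩
  have h := hτI m _ (isPartition_comp_clamp hτ h₀ hm) fun i hi => by
    simpa only [Fin.clamp_val_eq_castSucc ⟨i, hi⟩, Fin.clamp_val_add_one_eq_succ ⟨i, hi⟩]
      using hmesh ⟨i, hi⟩
  rw [riemannSum_comp_clamp] at h
  calc _ = ‖(∑ i : Fin m, Ξ (τ i.castSucc) (τ i.succ) - I) k‖ := by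
        rw [Pi.sub_apply, Finset.sum_apply, Real.norm_eq_abs]
    _ ≤ _ := norm_le_pi_norm _ k
    _ < ε := h

/-- For a controlled integrand `H̄ ∈ D_X(L(V,W))`, the
approximant `Ξ_{s,t} = ⟨H̄_s, X^{≥1}_{s,t}⟩` is almost additive with defect
`O(ω(s,t)^{(⌊p⌋+1)/p})`; consequently the rough integral `∫₀ᵀ H̄ dX` exists
as the limit of the Riemann sums `∑_{[u,v]∈π} Ξ_{u,v}` along partitions of
`[0,T]` with vanishing mesh. -/
theorem controlled_integrand_almost_additive_and_integral_exists
    (d e : ℕ) (p T : ℝ) (hp : 1 ≤ p) (hT : 0 ≤ T)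
    (ω : ℝ → ℝ → ℝ) (hω : IsControl ω T) (R : RoughPath d p T ω)
    (H : ℝ → List (Fin d) → Fin e → ℝ)
    (hHcont : ∀ w k, Continuous fun t => H t w k)
    (hHreg : ∃ C, ∀ w : List (Fin d), 1 ≤ w.length → w.length ≤ ⌊p⌋₊ →
      ∀ s t, 0 ≤ s → s ≤ t → t ≤ T → ∀ k,
        |H t w k - H s w k| ≤ C * ω s t ^ (1 / p))
    (hHctrl : ∃ C, ∀ (b : ℕ) (β : Fin b → Fin d), 1 ≤ b → b ≤ ⌊p⌋₊ - 1 →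
      ∀ s t, 0 ≤ s → s ≤ t → t ≤ T → ∀ k,
        |H t (List.ofFn β) k -
            ∑ l ∈ Finset.range (⌊p⌋₊ - b + 1), ∑ α : Fin l → Fin d,
              H s (List.ofFn α ++ List.ofFn β) k * R.X s t (List.ofFn α)|
          ≤ C * ω s t ^ (((⌊p⌋₊ : ℝ) - b + 1) / p)) :
    (∃ C, ∀ s u t, 0 ≤ s → s ≤ u → u ≤ t → t ≤ T → ∀ k,
        |Xi d e ⌊p⌋₊ R.X H s t k - Xi d e ⌊p⌋₊ R.X H s u k - Xi d e ⌊p⌋₊ R.X H u t k|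
          ≤ C * ω s t ^ (((⌊p⌋₊ : ℝ) + 1) / p)) ∧
    ∃ I : Fin e → ℝ, ∀ ε > (0 : ℝ), ∃ δ > (0 : ℝ),
      ∀ (m : ℕ) (τ : Fin (m + 1) → ℝ), Monotone τ → τ 0 = 0 → τ (Fin.last m) = T →
        (∀ i : Fin m, τ i.succ - τ i.castSucc < δ) → ∀ k,
          |(∑ i : Fin m, Xi d e ⌊p⌋₊ R.X H (τ i.castSucc) (τ i.succ) k) - I k| < ε :=
  controlled_integrand_almost_additive_and_integral_exists_general d e p T hp hT ω hω R H hHreg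
    hHctrl
end
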